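/- arXiv:2507.00228 — 5 statements merged into one kernel-verified Lean document; each statement's English description precedes it below -/
import Mathlib

section
/- Let r be an integer and let F = { a/q : 1 ≤ a ≤ q ≤ Q, gcd(a,q)=1, q is k-free, q ≡ b (mod m) }. Then ∑_{γ ∈ F} e(rγ) = ∑_{q ≤ Q, q | r} q · M_q(Q/q), where e(x) = e^{2πix} and M_q(x) = ∑_{d ≤ x, qd ≡ b (mod m)} μ(d)·μ_k(qd)². -/
open scoped Classical

/-- `n` is `k`-free: no prime `p` with `p ^ k ∣ n`. -/
def IsKFree (k n : ℕ) : Prop := ∀ p : ℕ, p.Prime → ¬ p ^ k ∣ n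

/-- The set of Farey fractions `a/q` of order `Q` with `gcd(a,q) = 1`, `q` being
`k`-free and `q ≡ b (mod m)`, as a finite set of rationals. -/
noncomputable def kfreeFarey (Q k m b : ℕ) : Finset ℚ :=
  ((Finset.Icc 1 Q ×ˢ Finset.Icc 1 Q).filter
    (fun p => p.1 ≤ p.2 ∧ Nat.gcd p.1 p.2 = 1 ∧ IsKFree k p.2 ∧ p.2 ≡ b [MOD m])).image
    (fun p => (p.1 : ℚ) / (p.2 : ℚ))

/-- `M_q(Q/q) = ∑_{d ≤ Q/q, qd ≡ b (mod m)} μ(d) μ_k(qd)²`. -/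
noncomputable def Mq (Q k m b q : ℕ) : ℤ :=
  ∑ d ∈ Finset.Icc 1 (Q / q),
    if q * d ≡ b [MOD m] ∧ IsKFree k (q * d) then ArithmeticFunction.moebius d else 0

/-- `e(x) = exp(2πix)`. -/
noncomputable def eAdd (x : ℝ) : ℂ := Complex.exp (2 * Real.pi * Complex.I * (x : ℂ))

open Finset

lemma sum_dvd_Icc (d N Q : ℕ) (hd : 0 < d) (hN : N ≤ Q) (g : ℕ → ℂ) :
    (∑ x ∈ Finset.Icc 1 Q, if d ∣ x ∧ x ≤ N then g x else 0)
      = ∑ y ∈ Finset.Icc 1 (N / d), g (d * y) := by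
  rw [← Finset.sum_filter]
  refine Finset.sum_nbij' (fun x => x / d) (fun y => d * y) ?_ ?_ ?_ ?_ ?_
  · intro a ha
    simp only [mem_filter, mem_Icc] at ha
    obtain ⟨⟨h1, h2⟩, hda, haN⟩ := ha
    simp only [mem_Icc]
    exact ⟨Nat.one_le_div_iff hd |>.2 (Nat.le_of_dvd h1 hda), Nat.div_le_div_right haN⟩
  · intro y hy
    simp only [mem_Icc] at hy
    simp only [mem_filter, mem_Icc]
    refine ⟨⟨Nat.mul_pos hd hy.1, le_trans ?_ hN⟩, ⟨y, rfl⟩, ?_⟩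
    · calc d * y ≤ d * (N / d) := Nat.mul_le_mul_left d hy.2
        _ ≤ N := Nat.mul_div_le N d
    · calc d * y ≤ d * (N / d) := Nat.mul_le_mul_left d hy.2
        _ ≤ N := Nat.mul_div_le N d
  · intro a ha
    simp only [mem_filter] at ha
    exact Nat.mul_div_cancel' ha.2.1
  · intro y hy
    exact Nat.mul_div_cancel_left y hd
  · intro a ha
    simp only [mem_filter] at ha
    rw [Nat.mul_div_cancel' ha.2.1]

lemma moebius_div_sum (n : ℕ) :
    (∑ d ∈ n.divisors, ArithmeticFunction.moebius d) = if n = 1 then 1 else 0 := by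
  rw [← ArithmeticFunction.coe_mul_zeta_apply, ArithmeticFunction.moebius_mul_coe_zeta,
    ArithmeticFunction.one_apply]

lemma swap_hyper (Q : ℕ) (F : ℕ → ℕ → ℂ) :
    ∑ d ∈ Finset.Icc 1 Q, ∑ q ∈ Finset.Icc 1 (Q / d), F d q
      = ∑ q ∈ Finset.Icc 1 Q, ∑ d ∈ Finset.Icc 1 (Q / q), F d q := by
  have key : ∀ (x : ℕ), x ∈ Finset.Icc 1 Q → ∀ (G : ℕ → ℂ),
      ∑ y ∈ Finset.Icc 1 (Q / x), G y = ∑ y ∈ Finset.Icc 1 Q, if x * y ≤ Q then G y else 0 := by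
    intro x hx G
    rw [← Finset.sum_filter]
    congr 1
    ext y
    simp only [mem_filter, mem_Icc]
    simp only [mem_Icc] at hx
    constructor
    · rintro ⟨h1, h2⟩
      have : x * y ≤ Q := by
        rw [mul_comm]
        exact (Nat.le_div_iff_mul_le (by omega)).1 h2
      exact ⟨⟨h1, le_trans (Nat.le_mul_of_pos_left y (by omega)) this⟩, this⟩
    · rintro ⟨⟨h1, _⟩, h3⟩
      exact ⟨h1, (Nat.le_div_iff_mul_le (by omega)).2 (by rw [mul_comm]; exact h3)⟩
  rw [Finset.sum_congr rfl (fun x hx => key x hx (F x)),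
    Finset.sum_congr rfl (fun x hx => key x hx (fun d => F d x))]
  rw [Finset.sum_comm]
  refine Finset.sum_congr rfl fun q hq => Finset.sum_congr rfl fun d hd => ?_
  rw [mul_comm]

lemma exp_sum_root (q : ℕ) (hq : 1 ≤ q) (r : ℤ) :
    ∑ a ∈ Finset.Icc 1 q, eAdd ((r : ℝ) * a / q) = if (q : ℤ) ∣ r then (q : ℂ) else 0 := by
  have hq0 : (q : ℂ) ≠ 0 := Nat.cast_ne_zero.2 (by omega)
  set z : ℂ := Complex.exp (2 * Real.pi * Complex.I * ((r : ℂ) / (q : ℂ))) with hz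
  have hterm : ∀ a : ℕ, eAdd ((r : ℝ) * a / q) = z ^ a := by
    intro a
    rw [eAdd, hz, ← Complex.exp_nat_mul]
    congr 1
    push_cast
    field_simp
  by_cases hdvd : (q : ℤ) ∣ r
  · obtain ⟨t, ht⟩ := hdvd
    have hz1 : z = 1 := by
      rw [hz, ht]
      have harg : (2 * (Real.pi:ℂ) * Complex.I * ((((q:ℤ) * t : ℤ) : ℂ) / (q : ℂ)))
          = (t : ℂ) * (2 * Real.pi * Complex.I) := by
        push_cast
        field_simp
      rw [harg]
      exact Complex.exp_int_mul_two_pi_mul_I t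
    have hdvd' : (q : ℤ) ∣ r := ⟨t, ht⟩
    rw [if_pos hdvd']
    simp only [hterm, hz1, one_pow, Finset.sum_const, Nat.card_Icc, smul_eq_mul, mul_one]
    simp
  · have hzq : z ^ q = 1 := by
      rw [hz, ← Complex.exp_nat_mul]
      have harg : (q : ℂ) * (2 * Real.pi * Complex.I * ((r : ℂ) / (q : ℂ)))
          = (r : ℂ) * (2 * Real.pi * Complex.I) := by
        field_simp
      rw [harg]
      exact_mod_cast Complex.exp_int_mul_two_pi_mul_I r
    have hzne : z ≠ 1 := by
      intro h
      rw [hz, Complex.exp_eq_one_iff] at h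
      obtain ⟨n, hn⟩ := h
      have h2 : (2 * (Real.pi:ℂ) * Complex.I : ℂ) ≠ 0 := by
        simp [Real.pi_ne_zero, Complex.I_ne_zero]
      have hn' : (2 * (Real.pi:ℂ) * Complex.I) * ((r : ℂ) / (q : ℂ))
          = (2 * (Real.pi:ℂ) * Complex.I) * (n : ℂ) := by rw [hn]; ring
      have hrq := mul_left_cancel₀ h2 hn'
      rw [div_eq_iff hq0] at hrq
      have hr : r = n * q := by exact_mod_cast hrq
      exact hdvd ⟨n, by rw [hr]; ring⟩
    rw [if_neg hdvd]
    have hsum : ∑ a ∈ Finset.Icc 1 q, z ^ a = z * ∑ i ∈ Finset.range q, z ^ i := by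
      rw [← Finset.Ico_add_one_right_eq_Icc, Finset.sum_Ico_eq_sum_range]
      rw [Finset.mul_sum]
      exact Finset.sum_congr rfl fun i _ => by rw [pow_add, pow_one, mul_comm]
    calc ∑ a ∈ Finset.Icc 1 q, eAdd ((r : ℝ) * a / q)
        = ∑ a ∈ Finset.Icc 1 q, z ^ a := Finset.sum_congr rfl fun a _ => hterm a
      _ = z * ∑ i ∈ Finset.range q, z ^ i := hsum
      _ = z * ((z ^ q - 1) / (z - 1)) := by rw [geom_sum_eq hzne]
      _ = 0 := by rw [hzq]; simp


/-- `∑_{γ ∈ F} e(rγ) = ∑_{q ≤ Q, q ∣ r} q · M_q(Q/q)`. -/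
theorem exp_sum_kfree_farey (Q k m b : ℕ) (hQ : 1 ≤ Q) (hk : 2 ≤ k) (hm : 1 ≤ m)
    (hb : Nat.gcd b m = 1) (r : ℤ) :
    ∑ γ ∈ kfreeFarey Q k m b, eAdd ((r : ℝ) * (γ : ℝ)) =
      ∑ q ∈ Finset.Icc 1 Q,
        if (q : ℤ) ∣ r then (q : ℂ) * (Mq Q k m b q : ℂ) else 0 := by
  classical
  set g : ℕ → ℕ → ℂ := fun a q => eAdd ((r : ℝ) * a / q) with hg
  set S := ((Finset.Icc 1 Q ×ˢ Finset.Icc 1 Q).filter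
    (fun p => p.1 ≤ p.2 ∧ Nat.gcd p.1 p.2 = 1 ∧ IsKFree k p.2 ∧ p.2 ≡ b [MOD m])) with hSdef
  -- injectivity on S
  have hinj : ∀ p ∈ S, ∀ p' ∈ S,
      (p.1 : ℚ) / (p.2 : ℚ) = (p'.1 : ℚ) / (p'.2 : ℚ) → p = p' := by
    intro p hp p' hp' heq
    simp only [hSdef, mem_filter, mem_product, mem_Icc] at hp hp'
    obtain ⟨⟨⟨ha1, _⟩, ⟨hq1, _⟩⟩, _, hgd, _⟩ := hp
    obtain ⟨⟨⟨ha1', _⟩, ⟨hq1', _⟩⟩, _, hgd', _⟩ := hp'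
    have hq0 : (p.2 : ℚ) ≠ 0 := Nat.cast_ne_zero.2 (by omega)
    have hq0' : (p'.2 : ℚ) ≠ 0 := Nat.cast_ne_zero.2 (by omega)
    have hcross : p.1 * p'.2 = p'.1 * p.2 := by
      have h : (p.1 : ℚ) * p'.2 = (p'.1 : ℚ) * p.2 := by
        field_simp at heq
        linarith
      exact_mod_cast h
    have hd1 : p.2 ∣ p'.2 := by
      refine Nat.Coprime.dvd_of_dvd_mul_left (Nat.coprime_comm.mp hgd) ?_
      exact ⟨p'.1, by rw [hcross]; ring⟩
    have hd2 : p'.2 ∣ p.2 := by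
      refine Nat.Coprime.dvd_of_dvd_mul_left (Nat.coprime_comm.mp hgd') ?_
      exact ⟨p.1, by rw [← hcross]; ring⟩
    have hq : p.2 = p'.2 := Nat.dvd_antisymm hd1 hd2
    have ha : p.1 = p'.1 := by
      have := hcross
      rw [hq] at this
      exact Nat.eq_of_mul_eq_mul_right (by omega) this
    exact Prod.ext ha hq
  -- Möbius expansion, pointwise
  have moeb : ∀ q ∈ Finset.Icc 1 Q, ∀ a ∈ Finset.Icc 1 Q,
      (if (a ≤ q ∧ Nat.gcd a q = 1 ∧ IsKFree k q ∧ q ≡ b [MOD m]) then g a q else 0)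
        = ∑ d ∈ Finset.Icc 1 Q,
            if (d ∣ a ∧ d ∣ q ∧ a ≤ q ∧ IsKFree k q ∧ q ≡ b [MOD m])
              then ((ArithmeticFunction.moebius d : ℤ) : ℂ) * g a q else 0 := by
    intro q hq a ha
    obtain ⟨ha1, haQ⟩ := mem_Icc.1 ha
    by_cases hcq : a ≤ q ∧ IsKFree k q ∧ q ≡ b [MOD m]
    · have hdivset : (Nat.gcd a q).divisors
          = (Finset.Icc 1 Q).filter (fun d => d ∣ a ∧ d ∣ q) := by
        ext d
        simp only [Nat.mem_divisors, mem_filter, mem_Icc]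
        constructor
        · rintro ⟨hd, _⟩
          have hda := hd.trans (Nat.gcd_dvd_left a q)
          have hdq := hd.trans (Nat.gcd_dvd_right a q)
          exact ⟨⟨Nat.pos_of_dvd_of_pos hda ha1, le_trans (Nat.le_of_dvd ha1 hda) haQ⟩, hda, hdq⟩
        · rintro ⟨⟨h1, _⟩, hda, hdq⟩
          refine ⟨Nat.dvd_gcd hda hdq, ?_⟩
          simp only [ne_eq, Nat.gcd_eq_zero_iff, not_and]
          intro h
          omega
      have e1 : ∑ d ∈ Finset.Icc 1 Q,
            (if (d ∣ a ∧ d ∣ q ∧ a ≤ q ∧ IsKFree k q ∧ q ≡ b [MOD m])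
              then ((ArithmeticFunction.moebius d : ℤ) : ℂ) * g a q else 0)
          = ∑ d ∈ Finset.Icc 1 Q,
            (if (d ∣ a ∧ d ∣ q) then ((ArithmeticFunction.moebius d : ℤ) : ℂ) * g a q else 0) :=
        Finset.sum_congr rfl fun d _ => if_congr (by tauto) rfl rfl
      have e2 : ∑ d ∈ Finset.Icc 1 Q,
            (if (d ∣ a ∧ d ∣ q) then ((ArithmeticFunction.moebius d : ℤ) : ℂ) * g a q else 0)
          = (∑ d ∈ (Nat.gcd a q).divisors, ((ArithmeticFunction.moebius d : ℤ) : ℂ)) * g a q := by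
        rw [hdivset, Finset.sum_filter, Finset.sum_mul]
        refine Finset.sum_congr rfl fun d _ => ?_
        by_cases h : d ∣ a ∧ d ∣ q <;> simp [h]
      have e3 : (∑ d ∈ (Nat.gcd a q).divisors, ((ArithmeticFunction.moebius d : ℤ) : ℂ))
          = if Nat.gcd a q = 1 then 1 else 0 := by
        have h2 := congrArg (Int.cast : ℤ → ℂ) (moebius_div_sum (Nat.gcd a q))
        rw [Int.cast_sum] at h2
        rw [h2]
        by_cases h : Nat.gcd a q = 1 <;> simp [h]
      rw [e1, e2, e3]
      by_cases hgcd : Nat.gcd a q = 1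
      · rw [if_pos ⟨hcq.1, hgcd, hcq.2⟩, if_pos hgcd, one_mul]
      · rw [if_neg (by tauto), if_neg hgcd, zero_mul]
    · rw [if_neg (by tauto)]
      refine (Finset.sum_eq_zero fun d _ => if_neg (by tauto)).symm
  -- main calc
  calc ∑ γ ∈ kfreeFarey Q k m b, eAdd ((r : ℝ) * (γ : ℝ))
      = ∑ p ∈ S, eAdd ((r : ℝ) * (((p.1 : ℚ) / (p.2 : ℚ) : ℚ) : ℝ)) := by
        rw [kfreeFarey, ← hSdef]
        exact Finset.sum_image hinj
    _ = ∑ p ∈ S, g p.1 p.2 := by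
        refine Finset.sum_congr rfl fun p hp => congrArg eAdd ?_
        push_cast
        ring
    _ = ∑ p ∈ Finset.Icc 1 Q ×ˢ Finset.Icc 1 Q,
          if (p.1 ≤ p.2 ∧ Nat.gcd p.1 p.2 = 1 ∧ IsKFree k p.2 ∧ p.2 ≡ b [MOD m])
            then g p.1 p.2 else 0 := by
        rw [hSdef, Finset.sum_filter]
    _ = ∑ a ∈ Finset.Icc 1 Q, ∑ q ∈ Finset.Icc 1 Q,
          if (a ≤ q ∧ Nat.gcd a q = 1 ∧ IsKFree k q ∧ q ≡ b [MOD m]) then g a q else 0 := by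
        rw [Finset.sum_product]
    _ = ∑ q ∈ Finset.Icc 1 Q, ∑ a ∈ Finset.Icc 1 Q,
          if (a ≤ q ∧ Nat.gcd a q = 1 ∧ IsKFree k q ∧ q ≡ b [MOD m]) then g a q else 0 :=
        Finset.sum_comm
    _ = ∑ q ∈ Finset.Icc 1 Q, ∑ a ∈ Finset.Icc 1 Q, ∑ d ∈ Finset.Icc 1 Q,
          if (d ∣ a ∧ d ∣ q ∧ a ≤ q ∧ IsKFree k q ∧ q ≡ b [MOD m])
            then ((ArithmeticFunction.moebius d : ℤ) : ℂ) * g a q else 0 :=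
        Finset.sum_congr rfl fun q hq => Finset.sum_congr rfl fun a ha => moeb q hq a ha
    _ = ∑ d ∈ Finset.Icc 1 Q, ∑ q ∈ Finset.Icc 1 Q, ∑ a ∈ Finset.Icc 1 Q,
          if (d ∣ a ∧ d ∣ q ∧ a ≤ q ∧ IsKFree k q ∧ q ≡ b [MOD m])
            then ((ArithmeticFunction.moebius d : ℤ) : ℂ) * g a q else 0 := by
        rw [Finset.sum_congr rfl fun q (_ : q ∈ Finset.Icc 1 Q) => Finset.sum_comm]
        exact Finset.sum_comm
    _ = ∑ d ∈ Finset.Icc 1 Q, ∑ q' ∈ Finset.Icc 1 (Q / d),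
          if (IsKFree k (d * q') ∧ (d * q') ≡ b [MOD m])
            then ((ArithmeticFunction.moebius d : ℤ) : ℂ)
              * (if (q' : ℤ) ∣ r then (q' : ℂ) else 0) else 0 := by
        refine Finset.sum_congr rfl fun d hd => ?_
        obtain ⟨hd1, hdQ⟩ := mem_Icc.1 hd
        have hd0 : 0 < d := hd1
        have hq_if : ∀ q ∈ Finset.Icc 1 Q,
            (∑ a ∈ Finset.Icc 1 Q,
              if (d ∣ a ∧ d ∣ q ∧ a ≤ q ∧ IsKFree k q ∧ q ≡ b [MOD m])
                then ((ArithmeticFunction.moebius d : ℤ) : ℂ) * g a q else 0)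
            = if d ∣ q ∧ q ≤ Q then
                (∑ a ∈ Finset.Icc 1 Q,
                  if (d ∣ a ∧ a ≤ q ∧ IsKFree k q ∧ q ≡ b [MOD m])
                    then ((ArithmeticFunction.moebius d : ℤ) : ℂ) * g a q else 0) else 0 := by
          intro q hq
          obtain ⟨hq1, hq2⟩ := mem_Icc.1 hq
          by_cases h : d ∣ q
          · rw [if_pos ⟨h, hq2⟩]
            exact Finset.sum_congr rfl fun a _ => if_congr (by tauto) rfl rfl
          · rw [if_neg (by tauto)]
            exact Finset.sum_eq_zero fun a _ => if_neg (by tauto)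
        rw [Finset.sum_congr rfl hq_if, sum_dvd_Icc d Q Q hd0 le_rfl]
        refine Finset.sum_congr rfl fun q' hq' => ?_
        obtain ⟨hq'1, hq'2⟩ := mem_Icc.1 hq'
        have hdq'Q : d * q' ≤ Q := by
          rw [mul_comm]
          exact (Nat.le_div_iff_mul_le hd0).1 hq'2
        by_cases hC : IsKFree k (d * q') ∧ (d * q') ≡ b [MOD m]
        · rw [if_pos hC]
          have e1 : (∑ a ∈ Finset.Icc 1 Q,
                if (d ∣ a ∧ a ≤ d * q' ∧ IsKFree k (d * q') ∧ (d * q') ≡ b [MOD m])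
                  then ((ArithmeticFunction.moebius d : ℤ) : ℂ) * g a (d * q') else 0)
              = ∑ a ∈ Finset.Icc 1 Q,
                if (d ∣ a ∧ a ≤ d * q')
                  then ((ArithmeticFunction.moebius d : ℤ) : ℂ) * g a (d * q') else 0 :=
            Finset.sum_congr rfl fun a _ => if_congr (by tauto) rfl rfl
          rw [e1, sum_dvd_Icc d (d * q') Q hd0 hdq'Q, Nat.mul_div_cancel_left _ hd0]
          have e2 : ∀ y ∈ Finset.Icc 1 q', g (d * y) (d * q') = g y q' := by
            intro y hy
            obtain ⟨hy1, _⟩ := mem_Icc.1 hy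
            refine congrArg eAdd ?_
            have hdr : (d : ℝ) ≠ 0 := Nat.cast_ne_zero.2 (by omega)
            have hqr : (q' : ℝ) ≠ 0 := Nat.cast_ne_zero.2 (by omega)
            push_cast
            field_simp
          rw [Finset.sum_congr rfl fun y hy => congrArg _ (e2 y hy), ← Finset.mul_sum,
            exp_sum_root q' hq'1 r]
        · rw [if_neg hC]
          exact Finset.sum_eq_zero fun a _ => if_neg (by tauto)
    _ = ∑ q' ∈ Finset.Icc 1 Q, ∑ d ∈ Finset.Icc 1 (Q / q'),
          if (IsKFree k (d * q') ∧ (d * q') ≡ b [MOD m])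
            then ((ArithmeticFunction.moebius d : ℤ) : ℂ)
              * (if (q' : ℤ) ∣ r then (q' : ℂ) else 0) else 0 :=
        swap_hyper Q _
    _ = ∑ q ∈ Finset.Icc 1 Q,
          if (q : ℤ) ∣ r then (q : ℂ) * (Mq Q k m b q : ℂ) else 0 := by
        refine Finset.sum_congr rfl fun q' hq' => ?_
        by_cases hr : (q' : ℤ) ∣ r
        · rw [if_pos hr]
          have hM : ((Mq Q k m b q' : ℤ) : ℂ)
              = ∑ d ∈ Finset.Icc 1 (Q / q'),
                  if (q' * d ≡ b [MOD m] ∧ IsKFree k (q' * d))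
                    then ((ArithmeticFunction.moebius d : ℤ) : ℂ) else 0 := by
            rw [Mq, Int.cast_sum]
            exact Finset.sum_congr rfl fun d _ => by rw [apply_ite (Int.cast : ℤ → ℂ)]; simp
          rw [if_pos hr, hM, Finset.mul_sum]
          refine Finset.sum_congr rfl fun d _ => ?_
          rw [mul_comm d q']
          by_cases hC : IsKFree k (q' * d) ∧ (q' * d) ≡ b [MOD m]
          · rw [if_pos hC, if_pos ⟨hC.2, hC.1⟩]
            ring
          · rw [if_neg hC, if_neg (by tauto), mul_zero]
        · rw [if_neg hr, if_neg hr]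
          refine Finset.sum_eq_zero fun d _ => ?_
          by_cases hC : IsKFree k (d * q') ∧ (d * q') ≡ b [MOD m] <;> simp [hC]
end

section
/- For any Dirichlet character χ modulo m and k ≥ 2, the Dirichlet series ∑_{n=1}^∞ χ(n)φ(n)μ_k(n)² n^{−s} equals (L(s−1,χ)/L(ks−k,χ^k)) · ∏_p ( 1 + (χ(p^k) − χ(p) p^{(k−1)(s−1)}) / ( p (p^{k(s−1)} − χ(p^k)) ) ) for Re(s) > 2, where the product is over all primes. -/
open scoped Classical

lemma isKFree_one {k : ℕ} (hk : k ≠ 0) : IsKFree k 1 := by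
  intro p hp h
  have h1 := Nat.eq_one_of_dvd_one h
  rcases (pow_eq_one_iff.mp h1).resolve_right hk with rfl
  exact hp.one_lt.ne' rfl

lemma isKFree_pow_iff {p k e : ℕ} (hp : p.Prime) (hk : 1 ≤ k) : IsKFree k (p ^ e) ↔ e < k := by
  constructor
  · intro h
    by_contra hlt
    exact h p hp (pow_dvd_pow p (by omega))
  · intro he q hq hdvd
    have hqp : q = p := by
      have : q ∣ p ^ e := dvd_trans (dvd_pow_self q (by omega)) hdvd
      exact (Nat.prime_dvd_prime_iff_eq hq hp).mp (hq.dvd_of_dvd_pow this)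
    subst hqp
    have := (Nat.pow_dvd_pow_iff_le_right hp.one_lt).mp hdvd
    omega

lemma isKFree_mul_iff {k m n : ℕ} (h : Nat.Coprime m n) :
    IsKFree k (m * n) ↔ IsKFree k m ∧ IsKFree k n := by
  constructor
  · intro H
    exact ⟨fun p hp hd => H p hp (hd.mul_right n), fun p hp hd => H p hp (hd.mul_left m)⟩
  · rintro ⟨H1, H2⟩ p hp hd
    by_cases hpm : p ∣ m
    · have hpn : ¬ p ∣ n := fun hpn =>
        hp.one_lt.ne' (Nat.eq_one_of_dvd_coprimes h hpm hpn)
      have hc : Nat.Coprime (p ^ k) n := Nat.Coprime.pow_left k (hp.coprime_iff_not_dvd.mpr hpn)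
      exact H1 p hp (hc.dvd_of_dvd_mul_right hd)
    · have hc : Nat.Coprime (p ^ k) m := Nat.Coprime.pow_left k (hp.coprime_iff_not_dvd.mpr hpm)
      exact H2 p hp (hc.dvd_of_dvd_mul_left hd)

open Complex in
lemma multipliable_one_add {ι : Type*} (f : ι → ℂ) (hf : Summable fun i => ‖f i‖)
    (h0 : ∀ i, 1 + f i ≠ 0) : Multipliable fun i => 1 + f i := by
  exact multipliable_one_add_of_summable hf

open Complex

/-- Euler-product type identity for the Dirichlet series of
`χ(n) φ(n) μ_k(n)²`, valid for `Re(s) > 2`. -/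
theorem dirichlet_series_totient_kfree (m k : ℕ) (hm : 1 ≤ m) (hk : 2 ≤ k)
    (χ : DirichletCharacter ℂ m) (s : ℂ) (hs : 2 < s.re) :
    LSeries (fun n => χ (n : ZMod m) * (Nat.totient n : ℂ) *
        (if IsKFree k n then 1 else 0)) s =
      LSeries (fun n => χ (n : ZMod m)) (s - 1) /
        LSeries (fun n => (χ ^ k) (n : ZMod m)) (k * s - k) *
      ∏' p : Nat.Primes,
        (1 + (χ ((p : ℕ) ^ k : ℕ) - χ ((p : ℕ) : ZMod m) *
              ((p : ℕ) : ℂ) ^ (((k : ℂ) - 1) * (s - 1))) /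
            (((p : ℕ) : ℂ) *
              (((p : ℕ) : ℂ) ^ ((k : ℂ) * (s - 1)) - χ ((p : ℕ) ^ k : ℕ)))) := by
  classical
  set σ : ℝ := s.re with hσdef
  -- the arithmetic function and its L-series terms
  set Fn : ℕ → ℂ := fun n => χ (n : ZMod m) * (Nat.totient n : ℂ) *
      (if IsKFree k n then 1 else 0) with hFn
  set f : ℕ → ℂ := LSeries.term Fn s with hfdef
  -- basic per-prime quantities
  set x : Nat.Primes → ℂ := fun p => χ ((p : ℕ) : ZMod m) * ((p : ℕ) : ℂ) ^ (-(s-1)) with hxdef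
  -- basic facts
  have hs1 : 1 < (s - 1).re := by
    simp only [sub_re, one_re]; linarith
  have hs2 : 1 < ((k : ℂ) * s - (k : ℂ)).re := by
    simp only [sub_re, mul_re, natCast_re, natCast_im, one_re, zero_mul, sub_zero]
    have : (2 : ℝ) ≤ (k : ℝ) := by exact_mod_cast hk
    nlinarith
  have hP0 : ∀ p : Nat.Primes, ((p : ℕ) : ℂ) ≠ 0 :=
    fun p => Nat.cast_ne_zero.mpr p.prop.pos.ne'
  have hp2 : ∀ p : Nat.Primes, (2 : ℝ) ≤ ((p : ℕ) : ℝ) :=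
    fun p => by exact_mod_cast p.prop.two_le
  have hx_le : ∀ p : Nat.Primes, ‖x p‖ ≤ (((p : ℕ) : ℝ))⁻¹ := by
    intro p
    have h1 : ‖x p‖ ≤ ((p : ℕ) : ℝ) ^ ((-(s-1)).re) := by
      rw [hxdef]
      simp only
      rw [norm_mul, norm_natCast_cpow_of_pos p.prop.pos]
      exact mul_le_of_le_one_left (Real.rpow_nonneg (Nat.cast_nonneg _) _)
        (χ.norm_le_one _)
    have h2 : ((p : ℕ) : ℝ) ^ ((-(s-1)).re) ≤ ((p : ℕ) : ℝ) ^ (-1 : ℝ) := by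
      apply Real.rpow_le_rpow_of_exponent_le (by linarith [hp2 p])
      simp only [neg_re, sub_re, one_re]; linarith
    rw [Real.rpow_neg_one] at h2
    linarith
  have hx_half : ∀ p : Nat.Primes, ‖x p‖ ≤ 1/2 := by
    intro p
    have := hx_le p
    have h2 := hp2 p
    have : (((p : ℕ) : ℝ))⁻¹ ≤ 1/2 := by
      rw [inv_le_comm₀ (by linarith) (by norm_num)]
      linarith
    linarith [hx_le p]
  have hxk_q : ∀ p : Nat.Primes, ‖(x p) ^ k‖ ≤ 1/4 := by
    intro p
    rw [norm_pow]
    calc ‖x p‖ ^ k ≤ (1/2 : ℝ) ^ k := by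
          exact pow_le_pow_left₀ (norm_nonneg _) (hx_half p) k
      _ ≤ (1/2 : ℝ) ^ 2 := by
          exact pow_le_pow_of_le_one (by norm_num) (by norm_num) hk
      _ = 1/4 := by norm_num
  have hax0 : ∀ p : Nat.Primes, (1 : ℂ) - x p ≠ 0 := by
    intro p h
    have h1 : ‖(1 : ℂ)‖ ≤ 1/2 := by
      have hx : (1 : ℂ) = x p := by linear_combination h
      rw [hx]; exact hx_half p
    norm_num at h1
  have hbx0 : ∀ p : Nat.Primes, (1 : ℂ) - (x p) ^ k ≠ 0 := by
    intro p
    intro h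
    have hx : (1 : ℂ) = (x p) ^ k := by linear_combination h
    have h2 : ‖(1 : ℂ)‖ ≤ 1/4 := by rw [hx]; exact hxk_q p
    norm_num at h2
  -- f is multiplicative with f 1 = 1 and summable norm
  have hFnmul : ∀ {a b : ℕ}, Nat.Coprime a b → Fn (a * b) = Fn a * Fn b := by
    intro a b hab
    rcases eq_or_ne a 0 with rfl | ha
    · simp [hFn]
    rcases eq_or_ne b 0 with rfl | hb
    · simp [hFn]
    simp only [hFn, Nat.cast_mul, map_mul, Nat.totient_mul hab, Nat.cast_mul]
    rw [isKFree_mul_iff hab]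
    by_cases h1 : IsKFree k a <;> by_cases h2 : IsKFree k b <;>
      simp [h1, h2] <;> ring
  have hf1 : f 1 = 1 := by
    rw [hfdef, LSeries.term_of_ne_zero one_ne_zero]
    simp [hFn, isKFree_one (by omega : k ≠ 0)]
  have hfmul : ∀ {a b : ℕ}, Nat.Coprime a b → f (a * b) = f a * f b := by
    intro a b hab
    rcases eq_or_ne a 0 with rfl | ha
    · simp [hfdef, LSeries.term_zero]
    rcases eq_or_ne b 0 with rfl | hb
    · simp [hfdef, LSeries.term_zero]
    rw [hfdef, LSeries.term_of_ne_zero (mul_ne_zero ha hb), LSeries.term_of_ne_zero ha,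
      LSeries.term_of_ne_zero hb, hFnmul hab, Nat.cast_mul, natCast_mul_natCast_cpow]
    rw [div_mul_div_comm]
  have hFn_le : ∀ n : ℕ, ‖Fn n‖ ≤ (n : ℝ) := by
    intro n
    rw [hFn]
    simp only
    rw [norm_mul, norm_mul]
    calc ‖χ (n : ZMod m)‖ * ‖(Nat.totient n : ℂ)‖ * ‖if IsKFree k n then (1:ℂ) else 0‖
        ≤ 1 * (n : ℝ) * 1 := by
          apply mul_le_mul
          · apply mul_le_mul (χ.norm_le_one _) ?_ (norm_nonneg _) zero_le_one
            rw [Complex.norm_natCast]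
            exact_mod_cast Nat.totient_le n
          · split <;> simp
          · exact norm_nonneg _
          · positivity
      _ = (n : ℝ) := by ring
  have hsum : Summable fun n => ‖f n‖ := by
    refine Summable.of_nonneg_of_le (fun n => norm_nonneg _) (fun n => ?_)
      ((Real.summable_nat_rpow (p := 1 - σ)).mpr (by linarith))
    · 
      rw [hfdef, LSeries.norm_term_eq]
      rcases eq_or_ne n 0 with rfl | hn
      · simp
        rw [Real.zero_rpow (by intro h; rw [sub_eq_zero] at h; linarith)]
      · rw [if_neg hn]
        have hn1 : (1 : ℝ) ≤ (n : ℝ) := by exact_mod_cast Nat.one_le_iff_ne_zero.mpr hn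
        have hnpos : (0 : ℝ) < (n : ℝ) := by linarith
        rw [div_le_iff₀ (Real.rpow_pos_of_pos hnpos _)]
        calc ‖Fn n‖ ≤ (n : ℝ) := hFn_le n
          _ = (n : ℝ) ^ (1 - σ) * (n : ℝ) ^ σ := by
              rw [← Real.rpow_add hnpos, sub_add_cancel, Real.rpow_one]
  have hC : HasProd (fun p : Nat.Primes => ∑' e : ℕ, f ((p : ℕ) ^ e)) (∑' n, f n) :=
    EulerProduct.eulerProduct_hasProd hf1 hfmul hsum (by rw [hfdef]; exact LSeries.term_zero _ _)
  -- computation of the local factors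
  have hlocal : ∀ p : Nat.Primes, (∑' e : ℕ, f ((p : ℕ) ^ e)) =
      1 + (1 - (((p : ℕ) : ℂ))⁻¹) * ∑ e ∈ Finset.Ico 1 k, (x p) ^ e := by
    intro p
    have hppos : 0 < (p : ℕ) := p.prop.pos
    have hvanish : ∀ e ∉ Finset.range k, f ((p : ℕ) ^ e) = 0 := by
      intro e he
      rw [Finset.mem_range, not_lt] at he
      rw [hfdef, LSeries.term_of_ne_zero (pow_ne_zero e hppos.ne')]
      have : ¬ IsKFree k ((p : ℕ) ^ e) := by
        rw [isKFree_pow_iff p.prop (by omega)]; omega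
      simp [hFn, this]
    rw [tsum_eq_sum hvanish, Finset.range_eq_Ico,
      Finset.sum_eq_sum_Ico_succ_bot (by omega : 0 < k)]
    rw [pow_zero, hf1]
    congr 1
    rw [Finset.mul_sum]
    apply Finset.sum_congr rfl
    intro e he
    rw [Finset.mem_Ico] at he
    obtain ⟨j, rfl⟩ : ∃ j, e = j + 1 := ⟨e - 1, by omega⟩
    rw [hfdef, LSeries.term_of_ne_zero (pow_ne_zero _ hppos.ne')]
    have hkfree : IsKFree k ((p : ℕ) ^ (j + 1)) := by
      rw [isKFree_pow_iff p.prop (by omega)]; omega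
    have htot : (Nat.totient ((p : ℕ) ^ (j + 1)) : ℂ) =
        ((p : ℕ) : ℂ) ^ j * (((p : ℕ) : ℂ) - 1) := by
      rw [Nat.totient_prime_pow p.prop (Nat.succ_pos j)]
      push_cast [Nat.cast_sub p.prop.one_le]
      ring
    have hcast : ((((p : ℕ) ^ (j + 1) : ℕ)) : ZMod m) = (((p : ℕ) : ZMod m)) ^ (j + 1) := by
      push_cast; ring
    have hchi : χ ((((p : ℕ) ^ (j + 1) : ℕ)) : ZMod m) = χ (((p : ℕ) : ZMod m)) ^ (j + 1) := by
      rw [hcast, map_pow]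
    rw [hFn]
    simp only [hchi, htot, if_pos hkfree, mul_one]
    -- rewrite the denominator
    have hden : ((((p : ℕ) ^ (j + 1) : ℕ)) : ℂ) ^ s = ((p : ℕ) : ℂ) ^ (((j + 1 : ℕ) : ℂ) * s) := by
      rw [natCast_cpow_natCast_mul]
      push_cast; ring_nf
    rw [hden]
    -- rewrite x p ^ (j+1)
    have hxpow : (x p) ^ (j + 1) =
        χ (((p : ℕ) : ZMod m)) ^ (j + 1) * (((p : ℕ) : ℂ) ^ ((j + 1 : ℕ) : ℂ) *
          (((p : ℕ) : ℂ) ^ (((j + 1 : ℕ) : ℂ) * s))⁻¹) := by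
      rw [hxdef]
      simp only
      rw [mul_pow, ← cpow_nat_mul]
      have : ((j + 1 : ℕ) : ℂ) * (-(s - 1)) = ((j + 1 : ℕ) : ℂ) + -(((j + 1 : ℕ) : ℂ) * s) := by
        ring
      rw [this, cpow_add _ _ (hP0 p), cpow_neg]
    rw [hxpow]
    have hE0 : (((p : ℕ) : ℂ) ^ (((j + 1 : ℕ) : ℂ) * s)) ≠ 0 := by
      intro h
      exact hP0 p (cpow_eq_zero_iff _ _ |>.mp h).1
    have hpow : ((p : ℕ) : ℂ) ^ ((j + 1 : ℕ) : ℂ) = ((p : ℕ) : ℂ) ^ (j + 1) := by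
      rw [cpow_natCast]
    rw [hpow]
    field_simp [hP0 p]
    ring
  -- rewriting the Euler factor of L(ks-k, χ^k)
  have hbeq : ∀ p : Nat.Primes,
      1 - (χ ^ k) ((p : ℕ) : ZMod m) * ((p : ℕ) : ℂ) ^ (-((k : ℂ) * s - (k : ℂ))) =
        1 - (x p) ^ k := by
    intro p
    have h1 : (χ ^ k) ((p : ℕ) : ZMod m) = χ ((p : ℕ) : ZMod m) ^ k :=
      MulChar.pow_apply' χ (by omega) _
    have h2 : (-((k : ℂ) * s - (k : ℂ))) = (k : ℕ) * (-(s - 1)) := by push_cast; ring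
    rw [h1, h2, cpow_nat_mul, hxdef]
    simp only [mul_pow]
  -- the G factor
  set Gv : Nat.Primes → ℂ := fun p =>
    1 + ((x p) ^ k - x p) / (((p : ℕ) : ℂ) * (1 - (x p) ^ k)) with hGvdef
  have hGeq : ∀ p : Nat.Primes,
      (1 + (χ (((p : ℕ) ^ k : ℕ) : ZMod m) - χ ((p : ℕ) : ZMod m) *
              ((p : ℕ) : ℂ) ^ (((k : ℂ) - 1) * (s - 1))) /
            (((p : ℕ) : ℂ) *
              (((p : ℕ) : ℂ) ^ ((k : ℂ) * (s - 1)) - χ (((p : ℕ) ^ k : ℕ) : ZMod m)))) = Gv p := by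
    intro p
    set P : ℂ := ((p : ℕ) : ℂ) with hPdef
    set Q : ℂ := P ^ ((k : ℂ) * (s - 1)) with hQdef
    have hQ : Q = (P ^ (s - 1)) ^ k := by
      rw [hQdef, show ((k : ℂ) * (s - 1)) = ((k : ℕ) : ℂ) * (s - 1) by push_cast; ring,
        cpow_nat_mul]
    have hPs0 : P ^ (s - 1) ≠ 0 := fun h => hP0 p ((cpow_eq_zero_iff _ _).mp h).1
    have hQ0 : Q ≠ 0 := by rw [hQ]; exact pow_ne_zero _ hPs0
    have hchik : χ (((p : ℕ) ^ k : ℕ) : ZMod m) = χ ((p : ℕ) : ZMod m) ^ k := by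
      rw [show (((p : ℕ) ^ k : ℕ) : ZMod m) = (((p : ℕ) : ZMod m)) ^ k by push_cast; ring,
        map_pow]
    have hxk : (x p) ^ k = χ ((p : ℕ) : ZMod m) ^ k * Q⁻¹ := by
      rw [hxdef]
      simp only [mul_pow]
      rw [cpow_neg, inv_pow, hQ]
    have hP1 : P ^ (((k : ℂ) - 1) * (s - 1)) = Q * P ^ (-(s - 1)) := by
      rw [hQdef, ← cpow_add _ _ (hP0 p)]
      congr 1
      ring
    have hnum : χ (((p : ℕ) ^ k : ℕ) : ZMod m) - χ ((p : ℕ) : ZMod m) *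
        P ^ (((k : ℂ) - 1) * (s - 1)) = Q * ((x p) ^ k - x p) := by
      rw [hchik, hP1, hxk, hxdef]
      field_simp
      ring
    have hden : P * (Q - χ (((p : ℕ) ^ k : ℕ) : ZMod m)) = P * (Q * (1 - (x p) ^ k)) := by
      rw [hchik, hxk]
      field_simp
    rw [hnum, hden, hGvdef]
    congr 1
    rw [div_eq_div_iff (by exact mul_ne_zero (hP0 p) (mul_ne_zero hQ0 (hbx0 p)))
      (mul_ne_zero (hP0 p) (hbx0 p))]
    ring
  -- the key local identity
  have hkey : ∀ p : Nat.Primes, (∑' e : ℕ, f ((p : ℕ) ^ e)) =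
      (1 - x p)⁻¹ * ((1 - (x p) ^ k) * Gv p) := by
    intro p
    have hgeom : (1 - x p) * (∑ e ∈ Finset.range k, (x p) ^ e) = 1 - (x p) ^ k := by
      linear_combination - geom_sum_mul (x p) k
    have hsplit : ∑ e ∈ Finset.Ico 1 k, (x p) ^ e =
        (∑ e ∈ Finset.range k, (x p) ^ e) - 1 := by
      rw [Finset.range_eq_Ico, Finset.sum_eq_sum_Ico_succ_bot (by omega : 0 < k)]
      simp
    have hexpand : (1 - (x p) ^ k) * Gv p = (1 - (x p) ^ k) + ((x p) ^ k - x p) * (((p : ℕ) : ℂ))⁻¹ := by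
      rw [hGvdef]
      field_simp [hP0 p, hbx0 p]
    rw [hlocal p, hsplit, hexpand, inv_mul_eq_div, eq_div_iff (hax0 p)]
    linear_combination (1 - (((p : ℕ) : ℂ))⁻¹) * hgeom
  -- summable base over primes
  have hbase : Summable fun p : Nat.Primes => ((((p : ℕ) : ℝ)) ^ 2)⁻¹ := by
    have h1 : Summable fun n : ℕ => (((n : ℝ)) ^ 2)⁻¹ := by
      simpa using Real.summable_one_div_nat_pow.mpr (one_lt_two)
    exact h1.comp_injective Subtype.val_injective
  -- Multipliable b
  have Mb : Multipliable fun p : Nat.Primes => 1 - (x p) ^ k := by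
    have := multipliable_one_add (fun p : Nat.Primes => -((x p) ^ k)) ?_ ?_
    · simpa [sub_eq_add_neg] using this
    · apply Summable.of_nonneg_of_le (fun p => norm_nonneg _) ?_ hbase
      intro p
      rw [norm_neg, norm_pow]
      calc ‖x p‖ ^ k ≤ ‖x p‖ ^ 2 :=
            pow_le_pow_of_le_one (norm_nonneg _) (by linarith [hx_half p]) hk
        _ ≤ ((((p : ℕ) : ℝ))⁻¹) ^ 2 := by
            exact pow_le_pow_left₀ (norm_nonneg _) (hx_le p) 2
        _ = ((((p : ℕ) : ℝ)) ^ 2)⁻¹ := by rw [inv_pow]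
    · intro p
      have := hbx0 p
      intro h
      apply this
      linear_combination h
  -- bound on the G correction term
  have hGbound : ∀ p : Nat.Primes,
      ‖((x p) ^ k - x p) / (((p : ℕ) : ℂ) * (1 - (x p) ^ k))‖ ≤ 3 * ((((p : ℕ) : ℝ)) ^ 2)⁻¹ := by
    intro p
    have hppos : (0 : ℝ) < ((p : ℕ) : ℝ) := by linarith [hp2 p]
    have hnum : ‖(x p) ^ k - x p‖ ≤ 2 * (((p : ℕ) : ℝ))⁻¹ := by
      calc ‖(x p) ^ k - x p‖ ≤ ‖(x p) ^ k‖ + ‖x p‖ := norm_sub_le _ _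
        _ ≤ (((p : ℕ) : ℝ))⁻¹ + (((p : ℕ) : ℝ))⁻¹ := by
            apply add_le_add ?_ (hx_le p)
            rw [norm_pow]
            calc ‖x p‖ ^ k ≤ ‖x p‖ := pow_le_of_le_one (norm_nonneg _)
                  (by linarith [hx_half p]) (by omega)
              _ ≤ _ := hx_le p
        _ = 2 * (((p : ℕ) : ℝ))⁻¹ := by ring
    have hden : (3 / 4 : ℝ) * ((p : ℕ) : ℝ) ≤ ‖((p : ℕ) : ℂ) * (1 - (x p) ^ k)‖ := by
      rw [norm_mul, Complex.norm_natCast]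
      have h1 : (3 / 4 : ℝ) ≤ ‖1 - (x p) ^ k‖ := by
        have := norm_sub_norm_le (1 : ℂ) ((x p) ^ k)
        have h2 := hxk_q p
        simp only [norm_one] at this
        linarith
      calc (3 / 4 : ℝ) * ((p : ℕ) : ℝ) = ((p : ℕ) : ℝ) * (3 / 4) := by ring
        _ ≤ ((p : ℕ) : ℝ) * ‖1 - (x p) ^ k‖ := by
            exact mul_le_mul_of_nonneg_left h1 (by linarith)
    rw [norm_div]
    have hdenpos : (0 : ℝ) < (3 / 4 : ℝ) * ((p : ℕ) : ℝ) := by linarith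
    calc ‖(x p) ^ k - x p‖ / ‖((p : ℕ) : ℂ) * (1 - (x p) ^ k)‖
        ≤ (2 * (((p : ℕ) : ℝ))⁻¹) / ((3 / 4 : ℝ) * ((p : ℕ) : ℝ)) := by
          exact div_le_div₀ (by positivity) hnum hdenpos hden
      _ ≤ 3 * ((((p : ℕ) : ℝ)) ^ 2)⁻¹ := by
          rw [div_le_iff₀ hdenpos]
          have h2 : ((((p : ℕ) : ℝ)) ^ 2)⁻¹ * ((p : ℕ) : ℝ) = (((p : ℕ) : ℝ))⁻¹ := by
            field_simp
          calc 2 * (((p : ℕ) : ℝ))⁻¹ ≤ (9/4) * (((p : ℕ) : ℝ))⁻¹ := by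
                have : (0:ℝ) ≤ (((p : ℕ) : ℝ))⁻¹ := by positivity
                linarith
            _ = 3 * ((((p : ℕ) : ℝ)) ^ 2)⁻¹ * ((3 / 4 : ℝ) * ((p : ℕ) : ℝ)) := by
                rw [show (3 : ℝ) * ((((p : ℕ) : ℝ)) ^ 2)⁻¹ * ((3 / 4 : ℝ) * ((p : ℕ) : ℝ))
                  = (9/4) * (((((p : ℕ) : ℝ)) ^ 2)⁻¹ * ((p : ℕ) : ℝ)) by ring, h2]
  have hGsmall : ∀ p : Nat.Primes,
      ‖((x p) ^ k - x p) / (((p : ℕ) : ℂ) * (1 - (x p) ^ k))‖ ≤ 3 / 4 := by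
    intro p
    refine le_trans (hGbound p) ?_
    have h2 := hp2 p
    have h4 : (4 : ℝ) ≤ (((p : ℕ) : ℝ)) ^ 2 := by nlinarith
    have : ((((p : ℕ) : ℝ)) ^ 2)⁻¹ ≤ 4⁻¹ := by
      apply inv_anti₀ (by norm_num) h4
    linarith
  have hGne : ∀ p : Nat.Primes, Gv p ≠ 0 := by
    intro p h
    rw [hGvdef] at h
    simp only at h
    have h1 : ((x p) ^ k - x p) / (((p : ℕ) : ℂ) * (1 - (x p) ^ k)) = -1 := by
      linear_combination h
    have h2 := hGsmall p
    rw [h1] at h2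
    norm_num at h2
  have MG : Multipliable Gv := by
    apply multipliable_one_add
    · apply Summable.of_nonneg_of_le (fun p => norm_nonneg _) hGbound (hbase.mul_left 3)
    · intro p
      exact hGne p
  -- the two L-series Euler products
  have hA : HasProd (fun p : Nat.Primes => (1 - x p)⁻¹)
      (LSeries (fun n => χ (n : ZMod m)) (s - 1)) :=
    DirichletCharacter.LSeries_eulerProduct_hasProd χ hs1
  have hB : HasProd (fun p : Nat.Primes => (1 - (x p) ^ k)⁻¹)
      (LSeries (fun n => (χ ^ k) (n : ZMod m)) ((k : ℂ) * s - (k : ℂ))) := by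
    have h := DirichletCharacter.LSeries_eulerProduct_hasProd (χ ^ k) hs2
    have heq : (fun p : Nat.Primes =>
        (1 - (χ ^ k) ((p : ℕ) : ZMod m) * ((p : ℕ) : ℂ) ^ (-((k : ℂ) * s - (k : ℂ))))⁻¹) =
        fun p : Nat.Primes => (1 - (x p) ^ k)⁻¹ := by
      funext p
      rw [hbeq p]
    rw [← heq]
    exact h
  set L1 : ℂ := LSeries (fun n => χ (n : ZMod m)) (s - 1) with hL1
  set L2 : ℂ := LSeries (fun n => (χ ^ k) (n : ZMod m)) ((k : ℂ) * s - (k : ℂ)) with hL2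
  have hL2ne : L2 ≠ 0 := DirichletCharacter.LSeries_ne_zero_of_one_lt_re (χ ^ k) hs2
  -- ∏' b = L2⁻¹
  have hprod_b : (∏' p : Nat.Primes, (1 - (x p) ^ k)) = L2⁻¹ := by
    have h1 : (∏' p : Nat.Primes, ((1 - (x p) ^ k) * (1 - (x p) ^ k)⁻¹)) =
        (∏' p : Nat.Primes, (1 - (x p) ^ k)) * (∏' p : Nat.Primes, (1 - (x p) ^ k)⁻¹) :=
      Multipliable.tprod_mul Mb hB.multipliable
    have h2 : (∏' p : Nat.Primes, ((1 - (x p) ^ k) * (1 - (x p) ^ k)⁻¹)) = 1 := by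
      rw [tprod_congr (fun p => mul_inv_cancel₀ (hbx0 p))]
      exact tprod_one
    rw [h2, hB.tprod_eq] at h1
    exact eq_inv_of_mul_eq_one_left h1.symm
  -- assembly
  have hchain : LSeries Fn s = L1 * (L2⁻¹ * ∏' p : Nat.Primes, Gv p) := by
    have e1 : LSeries Fn s = ∑' n, f n := rfl
    rw [e1, ← hC.tprod_eq, tprod_congr hkey,
      Multipliable.tprod_mul hA.multipliable (Mb.mul MG), Multipliable.tprod_mul Mb MG, hA.tprod_eq, hprod_b]
  rw [hchain, div_eq_mul_inv, mul_assoc]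
  congr 1
  congr 1
  exact (tprod_congr hGeq).symm
end

section
/- For k ≥ 2, the Dirichlet series of the k-free indicator twisted by a Dirichlet character χ and restricted to integers coprime to ℓ, together with the factor ξ_{d,k}(n) = μ_k(nd)² for k-free d, satisfies: ∑_{n ≥ 1, gcd(n,ℓ)=1} χ(n)μ(n)ξ_{d,k}(n) n^{−s} = (1/L(s,χ)) · ∏_{p | d} ( 1 + χ(p)(1 − ξ_{d,k}(p)) / (p^s − χ(p)) ) · ∏_{p | ℓ} ( 1 − χ(p)ξ_{d,k}(p) p^{−s} )^{−1}, valid for Re(s) > 1. -/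
open scoped Classical

/-- `ξ_{d,k}(n) = μ_k(nd)²`, the indicator that `n d` is `k`-free, as a complex number. -/
noncomputable def xiC (k d n : ℕ) : ℂ := if IsKFree k (n * d) then 1 else 0

lemma IsKFree.of_dvd {k a b : ℕ} (hab : a ∣ b) (hb : IsKFree k b) : IsKFree k a :=
  fun p hp hpk => hb p hp (hpk.trans hab)

lemma IsKFree.ne_zero {k d : ℕ} (hd : IsKFree k d) : d ≠ 0 := by
  rintro rfl
  exact hd 2 Nat.prime_two (dvd_zero _)

lemma xiC_one {k d : ℕ} (hd : IsKFree k d) : xiC k d 1 = 1 := by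
  simp [xiC, hd]

lemma xiC_mul {k d m n : ℕ} (hd : IsKFree k d) (hmn : Nat.Coprime m n) :
    xiC k d (m * n) = xiC k d m * xiC k d n := by
  rcases eq_or_ne m 0 with rfl | hm
  · obtain rfl : n = 1 := Nat.coprime_zero_left n |>.mp hmn
    simp [xiC_one hd]
  rcases eq_or_ne n 0 with rfl | hn
  · obtain rfl : m = 1 := Nat.coprime_zero_right m |>.mp hmn
    simp [xiC_one hd]
  have key : IsKFree k (m * n * d) ↔ IsKFree k (m * d) ∧ IsKFree k (n * d) := by
    constructor
    · intro h
      exact ⟨h.of_dvd ⟨n, by ring⟩, h.of_dvd ⟨m, by ring⟩⟩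
    · rintro ⟨h1, h2⟩ p hp hpk
      by_cases hpm : p ∣ m
      · have hpn : ¬ p ∣ n := fun h => hp.one_lt.ne' (Nat.eq_one_of_dvd_one
          (hmn ▸ Nat.dvd_gcd hpm h))
        have : (p ^ k).Coprime n := Nat.Coprime.pow_left _ ((hp.coprime_iff_not_dvd).mpr hpn)
        have : p ^ k ∣ m * d := this.dvd_of_dvd_mul_left (by rwa [show n * (m * d) = m * n * d by ring])
        exact h1 p hp this
      · have : (p ^ k).Coprime m := Nat.Coprime.pow_left _ ((hp.coprime_iff_not_dvd).mpr hpm)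
        have : p ^ k ∣ n * d := this.dvd_of_dvd_mul_left (by rwa [show m * (n * d) = m * n * d by ring])
        exact h2 p hp this
  unfold xiC
  by_cases h : IsKFree k (m * n * d)
  · rw [if_pos h, if_pos (key.mp h).1, if_pos (key.mp h).2, one_mul]
  · rw [if_neg h]
    rcases (not_and_or.mp (fun hh => h (key.mpr hh))) with h' | h'
    · rw [if_neg h', zero_mul]
    · rw [if_neg h', mul_zero]

lemma xiC_prime_of_not_dvd {k d p : ℕ} (hk : 2 ≤ k) (hd : IsKFree k d) (hp : p.Prime)
    (hpd : ¬ p ∣ d) : xiC k d p = 1 := by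
  rw [xiC, if_pos]
  intro q hq hqk
  by_cases hqp : q = p
  · subst hqp
    have : q ^ k = q * q ^ (k - 1) := by
      rw [← pow_succ']
      congr 1
      omega
    rw [this] at hqk
    have := (mul_dvd_mul_iff_left hq.pos.ne').mp hqk
    exact hpd (dvd_trans (dvd_pow_self q (by omega)) this)
  · have : (q ^ k).Coprime p := Nat.Coprime.pow_left _ ((Nat.coprime_primes hq hp).mpr hqp)
    exact hd q hq (this.dvd_of_dvd_mul_left hqk)

lemma xiC_zero_or_one (k d p : ℕ) : xiC k d p = 0 ∨ xiC k d p = 1 := by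
  unfold xiC; split <;> simp


lemma hasProd_primes_ite {N : ℕ} (hN : N ≠ 0) (g : ℕ → ℂ) :
    HasProd (fun p : Nat.Primes => if (p : ℕ) ∣ N then g p else 1)
      (∏ p ∈ N.primeFactors, g p) := by
  set emb : {x // x ∈ N.primeFactors} ↪ Nat.Primes :=
    ⟨fun x => ⟨x.1, Nat.prime_of_mem_primeFactors x.2⟩,
      by intro a b hab; exact Subtype.ext (Subtype.mk_eq_mk.mp hab)⟩ with hemb
  set T : Finset Nat.Primes := N.primeFactors.attach.map emb with hT
  have hmem : ∀ p : Nat.Primes, p ∈ T ↔ (p : ℕ) ∣ N := by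
    intro p
    rw [hT]
    simp only [Finset.mem_map, Finset.mem_attach, true_and, hemb,
      Function.Embedding.coeFn_mk]
    constructor
    · rintro ⟨x, rfl⟩
      exact Nat.dvd_of_mem_primeFactors x.2
    · intro hdvd
      exact ⟨⟨p.1, Nat.mem_primeFactors.mpr ⟨p.2, hdvd, hN⟩⟩, Subtype.ext rfl⟩
  have h := hasProd_prod_of_ne_finset_one
    (f := fun p : Nat.Primes => if (p : ℕ) ∣ N then g p else 1) (s := T) (L := SummationFilter.unconditional _)
    (fun p hp => if_neg (fun h => hp ((hmem p).mpr h)))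
  have hval : ∏ p ∈ T, (if (p : ℕ) ∣ N then g p else 1) = ∏ p ∈ N.primeFactors, g p := by
    rw [hT, Finset.prod_map]
    have : ∀ x ∈ N.primeFactors.attach,
        (if ((emb x : Nat.Primes) : ℕ) ∣ N then g ((emb x : Nat.Primes) : ℕ) else 1) = g x.1 := by
      intro x _
      rw [hemb]
      exact if_pos (Nat.dvd_of_mem_primeFactors x.2)
    rw [Finset.prod_congr rfl this, Finset.prod_attach]
  rwa [hval] at h

open ArithmeticFunction LSeries Complex EulerProduct Nat

set_option maxHeartbeats 1000000 in
/-- Euler-product identity for the twisted Möbius Dirichlet series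
restricted to integers coprime to `ℓ`, valid for `Re(s) > 1`. -/
theorem dirichlet_series_moebius_xi (m k d ℓ : ℕ) (hm : 1 ≤ m) (hk : 2 ≤ k)
    (hℓ : 1 ≤ ℓ) (hd : IsKFree k d) (χ : DirichletCharacter ℂ m)
    (s : ℂ) (hs : 1 < s.re) :
    LSeries (fun n => if Nat.gcd n ℓ = 1 then
        χ (n : ZMod m) * (ArithmeticFunction.moebius n : ℂ) * xiC k d n else 0) s =
      (LSeries (fun n => χ (n : ZMod m)) s)⁻¹ *
      (∏ p ∈ d.primeFactors,
        (1 + χ (p : ZMod m) * (1 - xiC k d p) / ((p : ℂ) ^ s - χ (p : ZMod m)))) *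
      (∏ p ∈ ℓ.primeFactors,
        (1 - χ (p : ZMod m) * xiC k d p / (p : ℂ) ^ s)⁻¹) := by
  have hs0 : s ≠ 0 := ne_zero_of_one_lt_re hs
  set F : ℕ → ℂ := fun n => if Nat.gcd n ℓ = 1 then
      χ (n : ZMod m) * (ArithmeticFunction.moebius n : ℂ) * xiC k d n else 0 with hF
  -- basic values of F
  have hF0 : F 0 = 0 := by simp [hF]
  have hF1 : F 1 = 1 := by simp [hF, xiC_one hd]
  have hFnorm : ∀ n, ‖F n‖ ≤ 1 := by
    intro n
    simp only [hF]
    split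
    · rw [norm_mul, norm_mul]
      have h1 : ‖χ (n : ZMod m)‖ ≤ 1 := χ.norm_le_one _
      have h2 : ‖((moebius n : ℤ) : ℂ)‖ ≤ 1 := by
        by_cases hn : Squarefree n
        · rw [moebius_apply_of_squarefree hn]
          push_cast
          simp
        · rw [moebius_eq_zero_of_not_squarefree hn]
          simp
      have h3 : ‖xiC k d n‖ ≤ 1 := by
        unfold xiC; split <;> simp
      calc ‖χ (n : ZMod m)‖ * ‖((moebius n : ℤ) : ℂ)‖ * ‖xiC k d n‖
          ≤ 1 * 1 * 1 := by
            gcongr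
        _ = 1 := by norm_num
    · simp
  -- multiplicativity of F
  have hFmul : ∀ {a b : ℕ}, Nat.Coprime a b → F (a * b) = F a * F b := by
    intro a b hab
    rcases eq_or_ne a 0 with rfl | ha
    · obtain rfl : b = 1 := Nat.coprime_zero_left b |>.mp hab
      simp [hF0, hF1]
    rcases eq_or_ne b 0 with rfl | hb
    · obtain rfl : a = 1 := Nat.coprime_zero_right a |>.mp hab
      simp [hF0, hF1]
    have hgcd : Nat.Coprime (a * b) ℓ ↔ Nat.Coprime a ℓ ∧ Nat.Coprime b ℓ :=
      Nat.coprime_mul_iff_left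
    rw [hF]
    simp only
    by_cases hca : Nat.gcd a ℓ = 1 <;> by_cases hcb : Nat.gcd b ℓ = 1
    · rw [if_pos (hgcd.mpr ⟨hca, hcb⟩), if_pos hca, if_pos hcb]
      rw [isMultiplicative_moebius.map_mul_of_coprime hab, xiC_mul hd hab]
      push_cast
      rw [map_mul]
      ring
    · rw [if_neg (fun h => hcb (hgcd.mp h).2), if_neg hcb, mul_zero]
    · rw [if_neg (fun h => hca (hgcd.mp h).1), if_neg hca, zero_mul]
    · rw [if_neg (fun h => hca (hgcd.mp h).1), if_neg hca, zero_mul]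
  -- term multiplicativity
  have htermmul : ∀ {a b : ℕ}, Nat.Coprime a b →
      term F s (a * b) = term F s a * term F s b := by
    intro a b hab
    rcases eq_or_ne a 0 with rfl | ha
    · simp [term_zero]
    rcases eq_or_ne b 0 with rfl | hb
    · simp [term_zero]
    rw [term_of_ne_zero (Nat.mul_ne_zero ha hb), term_of_ne_zero ha, term_of_ne_zero hb,
      hFmul hab, Nat.cast_mul]
    rw [show ((a : ℂ)) = ((a : ℝ) : ℂ) by push_cast; ring,
      show ((b : ℂ)) = ((b : ℝ) : ℂ) by push_cast; ring,
      mul_cpow_ofReal_nonneg a.cast_nonneg b.cast_nonneg]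
    exact (_root_.div_mul_div_comm _ _ _ _).symm
  -- summability
  have hsum : Summable (fun n => ‖term F s n‖) := by
    apply (summable_riemannZetaSummand hs).of_nonneg_of_le (fun _ => norm_nonneg _)
    intro n
    rcases eq_or_ne n 0 with rfl | hn
    · simp [term_zero, riemannZetaSummandHom]
    rw [term_of_ne_zero hn]
    simp only [riemannZetaSummandHom, MonoidWithZeroHom.coe_mk, ZeroHom.coe_mk]
    rw [norm_div, cpow_neg, norm_inv, div_eq_mul_inv]
    exact mul_le_of_le_one_left (by positivity) (hFnorm n)
  -- the Euler product for F
  have hterm1 : term F s 1 = 1 := by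
    rw [term_of_ne_zero one_ne_zero, hF1, Nat.cast_one, one_cpow, div_one]
  have hEuler : HasProd
      (fun p : Nat.Primes => (1 - χ ((p : ℕ) : ZMod m) *
        (if Nat.gcd (p : ℕ) ℓ = 1 then xiC k d p else 0) * ((p : ℕ) : ℂ) ^ (-s)))
      (LSeries F s) := by
    have h := eulerProduct_hasProd hterm1 htermmul hsum (by simp [term_zero])
    have heq : (fun p : Nat.Primes => ∑' e : ℕ, term F s ((p : ℕ) ^ e)) =
        (fun p : Nat.Primes => (1 - χ ((p : ℕ) : ZMod m) *
          (if Nat.gcd (p : ℕ) ℓ = 1 then xiC k d p else 0) * ((p : ℕ) : ℂ) ^ (-s))) := by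
      funext p
      have hp := p.2
      have hsum2 : ∑' e : ℕ, term F s ((p : ℕ) ^ e) =
          ∑ e ∈ ({0, 1} : Finset ℕ), term F s ((p : ℕ) ^ e) := by
        apply tsum_eq_sum
        intro e he
        have he2 : 2 ≤ e := by
          simp only [Finset.mem_insert, Finset.mem_singleton] at he
          omega
        rw [term_of_ne_zero (pow_ne_zero _ hp.pos.ne')]
        have : F ((p : ℕ) ^ e) = 0 := by
          rw [hF]
          simp only
          split
          · rw [moebius_apply_prime_pow hp (by omega), if_neg (by omega)]
            push_cast
            ring
          · rfl
        rw [this, zero_div]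
      rw [hsum2, Finset.sum_insert (by simp), Finset.sum_singleton, pow_zero, pow_one, hterm1,
        term_of_ne_zero hp.pos.ne']
      rw [hF]
      simp only
      rw [cpow_neg]
      by_cases hc : Nat.gcd (p : ℕ) ℓ = 1
      · rw [if_pos hc, if_pos hc, moebius_apply_prime hp]
        push_cast
        field_simp
        ring
      · rw [if_neg hc, if_neg hc]
        simp
    rw [← heq]
    exact h
  -- L-series of χ
  have hLprod : HasProd (fun p : Nat.Primes => (1 - χ ((p : ℕ) : ZMod m) * ((p : ℕ) : ℂ) ^ (-s))⁻¹)
      (LSeries (fun n => χ (n : ZMod m)) s) :=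
    DirichletCharacter.LSeries_eulerProduct_hasProd χ hs
  have hLne : LSeries (fun n => χ (n : ZMod m)) s ≠ 0 :=
    DirichletCharacter.LSeries_ne_zero_of_one_lt_re χ hs
  -- nonvanishing facts
  have hx : ∀ p : Nat.Primes, ((p : ℕ) : ℂ) ^ s ≠ 0 := by
    intro p
    rw [Ne, cpow_eq_zero_iff]
    push_neg
    intro h
    exact absurd h (by exact_mod_cast p.2.pos.ne')
  have hhalf : ∀ p : Nat.Primes, ‖χ ((p : ℕ) : ZMod m) * ((p : ℕ) : ℂ) ^ (-s)‖ ≤ 1 / 2 := by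
    intro p
    rw [norm_mul]
    calc ‖χ ((p : ℕ) : ZMod m)‖ * ‖((p : ℕ) : ℂ) ^ (-s)‖ ≤ 1 * (1 / 2) := by
          gcongr
          · exact χ.norm_le_one _
          · exact norm_prime_cpow_le_one_half p hs
      _ = 1 / 2 := one_mul _
  have hxa : ∀ p : Nat.Primes, ((p : ℕ) : ℂ) ^ s - χ ((p : ℕ) : ZMod m) ≠ 0 := by
    intro p hcontra
    have hinv : ((p : ℕ) : ℂ) ^ (-s) = (((p : ℕ) : ℂ) ^ s)⁻¹ := cpow_neg _ _
    have hb : ‖(((p : ℕ) : ℂ) ^ s)‖⁻¹ ≤ 1 / 2 := by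
      have := norm_prime_cpow_le_one_half p hs
      rwa [hinv, norm_inv] at this
    have hpos : (0 : ℝ) < ‖(((p : ℕ) : ℂ) ^ s)‖ := norm_pos_iff.mpr (hx p)
    have h2 : (2 : ℝ) ≤ ‖(((p : ℕ) : ℂ) ^ s)‖ := by
      have := (inv_le_comm₀ hpos (by norm_num : (0:ℝ) < 1 / 2)).mp hb
      linarith [this]
    have h1 : ‖χ ((p : ℕ) : ZMod m)‖ ≤ 1 := χ.norm_le_one _
    rw [sub_eq_zero] at hcontra
    rw [hcontra] at h2
    linarith
  have h1ne : ∀ p : Nat.Primes, 1 - χ ((p : ℕ) : ZMod m) * ((p : ℕ) : ℂ) ^ (-s) ≠ 0 := by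
    intro p hcontra
    rw [sub_eq_zero] at hcontra
    have := hhalf p
    rw [← hcontra, norm_one] at this
    linarith
  -- pointwise identity
  have hpoint : ∀ p : Nat.Primes,
      (1 - χ ((p : ℕ) : ZMod m) * ((p : ℕ) : ℂ) ^ (-s))⁻¹ *
      (1 - χ ((p : ℕ) : ZMod m) * (if Nat.gcd (p : ℕ) ℓ = 1 then xiC k d p else 0) *
        ((p : ℕ) : ℂ) ^ (-s)) =
      (if (p : ℕ) ∣ d then
        1 + χ ((p : ℕ) : ZMod m) * (1 - xiC k d p) / (((p : ℕ) : ℂ) ^ s - χ ((p : ℕ) : ZMod m))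
       else 1) *
      (if (p : ℕ) ∣ ℓ then
        (1 - χ ((p : ℕ) : ZMod m) * xiC k d p / ((p : ℕ) : ℂ) ^ s)⁻¹ else 1) := by
    intro p
    have hp := p.2
    have hxp := hx p
    have hxap := hxa p
    have h1p := h1ne p
    have hinv : ((p : ℕ) : ℂ) ^ (-s) = (((p : ℕ) : ℂ) ^ s)⁻¹ := cpow_neg _ _
    by_cases hpl : (p : ℕ) ∣ ℓ
    · have hgcd : ¬ Nat.gcd (p : ℕ) ℓ = 1 := fun h => (hp.coprime_iff_not_dvd.mp h) hpl
      rw [if_neg hgcd, if_pos hpl, mul_zero, zero_mul, sub_zero, mul_one]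
      by_cases hpd : (p : ℕ) ∣ d
      · rw [if_pos hpd]
        rw [hinv] at h1p ⊢
        rcases xiC_zero_or_one k d (p : ℕ) with he | he <;> rw [he]
        · field_simp
          simp [hxp]
        · field_simp
          try ring
      · rw [if_neg hpd, xiC_prime_of_not_dvd hk hd hp hpd, one_mul, mul_one, div_eq_mul_inv,
          ← hinv]
    · have hgcd : Nat.gcd (p : ℕ) ℓ = 1 := (hp.coprime_iff_not_dvd).mpr hpl
      rw [if_pos hgcd, if_neg hpl, mul_one]
      by_cases hpd : (p : ℕ) ∣ d
      · rw [if_pos hpd]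
        rw [hinv] at h1p ⊢
        rcases xiC_zero_or_one k d (p : ℕ) with he | he <;> rw [he]
        · field_simp
          try ring
        · field_simp
          try ring
      · rw [if_neg hpd, xiC_prime_of_not_dvd hk hd hp hpd, mul_one]
        exact inv_mul_cancel₀ h1p
  -- the correction products
  have hAhas : HasProd (fun p : Nat.Primes => (if (p : ℕ) ∣ d then
      1 + χ ((p : ℕ) : ZMod m) * (1 - xiC k d p) / (((p : ℕ) : ℂ) ^ s - χ ((p : ℕ) : ZMod m))
      else 1))
      (∏ p ∈ d.primeFactors,
        (1 + χ (p : ZMod m) * (1 - xiC k d p) / ((p : ℂ) ^ s - χ (p : ZMod m)))) :=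
    hasProd_primes_ite hd.ne_zero _
  have hBhas : HasProd (fun p : Nat.Primes => (if (p : ℕ) ∣ ℓ then
      (1 - χ ((p : ℕ) : ZMod m) * xiC k d p / ((p : ℕ) : ℂ) ^ s)⁻¹ else 1))
      (∏ p ∈ ℓ.primeFactors,
        (1 - χ (p : ZMod m) * xiC k d p / (p : ℂ) ^ s)⁻¹) :=
    hasProd_primes_ite (by omega) _
  -- combine
  have key : LSeries (fun n => χ (n : ZMod m)) s * LSeries F s =
      (∏ p ∈ d.primeFactors,
        (1 + χ (p : ZMod m) * (1 - xiC k d p) / ((p : ℂ) ^ s - χ (p : ZMod m)))) *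
      (∏ p ∈ ℓ.primeFactors,
        (1 - χ (p : ZMod m) * xiC k d p / (p : ℂ) ^ s)⁻¹) := by
    rw [← hLprod.tprod_eq, ← hEuler.tprod_eq,
      ← Multipliable.tprod_mul hLprod.multipliable hEuler.multipliable,
      tprod_congr hpoint,
      Multipliable.tprod_mul hAhas.multipliable hBhas.multipliable,
      hAhas.tprod_eq, hBhas.tprod_eq]
  calc LSeries F s
      = (LSeries (fun n => χ (n : ZMod m)) s)⁻¹ *
        (LSeries (fun n => χ (n : ZMod m)) s * LSeries F s) := by
        rw [← mul_assoc, inv_mul_cancel₀ hLne, one_mul]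
    _ = _ := by rw [key, mul_assoc]
end

section
/- For Q ≥ 1 and α ∈ [0,1], let A(α) = #{ a/q : 1 ≤ a ≤ qα, q ≤ Q, gcd(a,q)=1, q k-free, q ≡ b (mod m) } and N = A(1). Then A(α) − αN = −∑_{d ≤ Q} μ(d) ∑_{q ≤ Q/d, qd ≡ b (mod m)} μ_k(qd)² · {qα}, where {x} denotes the fractional part of x. -/
open scoped Classical
open Finset ArithmeticFunction
open scoped ArithmeticFunction.Moebius

/-- `A(α) = #{a/q : 1 ≤ a ≤ qα, q ≤ Q, gcd(a,q)=1, q k-free, q ≡ b (mod m)}`. -/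
noncomputable def countA (Q k m b : ℕ) (α : ℝ) : ℕ :=
  ((Finset.Icc 1 Q ×ˢ Finset.Icc 1 Q).filter
    (fun p => (p.1 : ℝ) ≤ (p.2 : ℝ) * α ∧ Nat.gcd p.1 p.2 = 1 ∧ IsKFree k p.2 ∧
      p.2 ≡ b [MOD m])).card

lemma sum_moebius_divisors (n : ℕ) :
    ∑ d ∈ n.divisors, (μ d : ℤ) = if n = 1 then 1 else 0 := by
  rw [← ArithmeticFunction.coe_mul_zeta_apply, ArithmeticFunction.moebius_mul_coe_zeta,
    ArithmeticFunction.one_apply]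

lemma count_coprime (q N : ℕ) (hq : q ≠ 0) :
    (((Finset.Icc 1 N).filter (fun a => Nat.gcd a q = 1)).card : ℤ) =
      ∑ d ∈ q.divisors, (μ d : ℤ) * ((N / d : ℕ) : ℤ) := by
  rw [Finset.card_filter]
  push_cast
  have h1 : ∀ a ∈ Finset.Icc 1 N, (if Nat.gcd a q = 1 then (1:ℤ) else 0) =
      ∑ d ∈ q.divisors.filter (· ∣ a), (μ d : ℤ) := by
    intro a ha
    have hgcd : q.divisors.filter (· ∣ a) = (Nat.gcd a q).divisors := by
      ext d
      simp only [Finset.mem_filter, Nat.mem_divisors, Nat.dvd_gcd_iff]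
      constructor
      · rintro ⟨⟨h1, _⟩, h3⟩
        exact ⟨⟨h3, h1⟩, fun h => hq (Nat.eq_zero_of_gcd_eq_zero_right h)⟩
      · rintro ⟨⟨h1, h2⟩, _⟩
        exact ⟨⟨h2, hq⟩, h1⟩
    rw [hgcd, sum_moebius_divisors]
  rw [Finset.sum_congr rfl h1]
  simp only [Finset.sum_filter]
  rw [Finset.sum_comm]
  refine Finset.sum_congr rfl fun d hd => ?_
  rw [← Finset.sum_filter, Finset.sum_const, nsmul_eq_mul, mul_comm]
  congr 1
  have : Finset.Icc 1 N = Finset.Ioc 0 N := rfl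
  rw [this]
  exact_mod_cast congrArg (Nat.cast : ℕ → ℤ) (Nat.Ioc_filter_dvd_card_eq_div N d)

lemma swap_div (Q : ℕ) (f : ℕ → ℕ → ℤ) :
    ∑ q ∈ Finset.Icc 1 Q, ∑ d ∈ q.divisors, f d q =
      ∑ d ∈ Finset.Icc 1 Q, ∑ q ∈ Finset.Icc 1 (Q / d), f d (q * d) := by
  rw [Finset.sum_sigma', Finset.sum_sigma']
  refine Finset.sum_nbij' (fun p => ⟨p.2, p.1 / p.2⟩) (fun p => ⟨p.2 * p.1, p.1⟩) ?_ ?_ ?_ ?_ ?_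
  · rintro ⟨q, d⟩ hp
    simp only [Finset.mem_sigma, Finset.mem_Icc, Nat.mem_divisors] at hp ⊢
    obtain ⟨⟨hq1, hqQ⟩, hdq, hq0⟩ := hp
    have hd1 : 1 ≤ d := Nat.pos_of_dvd_of_pos hdq (by omega)
    refine ⟨⟨hd1, le_trans (Nat.le_of_dvd (by omega) hdq) hqQ⟩,
      ⟨Nat.one_le_div_iff (by omega) |>.2 (Nat.le_of_dvd (by omega) hdq),
        Nat.div_le_div_right hqQ⟩⟩
  · rintro ⟨d, q⟩ hp
    simp only [Finset.mem_sigma, Finset.mem_Icc, Nat.mem_divisors] at hp ⊢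
    obtain ⟨⟨hd1, hdQ⟩, hq1, hqQd⟩ := hp
    refine ⟨⟨Nat.one_le_iff_ne_zero.2 (Nat.mul_ne_zero (by omega) (by omega)), ?_⟩,
      Dvd.intro_left q rfl, Nat.mul_ne_zero (by omega) (by omega)⟩
    calc q * d = d * q := mul_comm _ _
    _ ≤ d * (Q / d) := Nat.mul_le_mul_left d hqQd
    _ ≤ Q := Nat.mul_div_le Q d
  · rintro ⟨q, d⟩ hp
    simp only [Finset.mem_sigma, Finset.mem_Icc, Nat.mem_divisors] at hp
    obtain ⟨_, hdq, _⟩ := hp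
    simp [Nat.mul_div_cancel' hdq, mul_comm]
  · rintro ⟨d, q⟩ hp
    simp only [Finset.mem_sigma, Finset.mem_Icc, Nat.mem_divisors] at hp
    obtain ⟨⟨hd1, _⟩, _⟩ := hp
    simp [Nat.mul_div_cancel_left _ (by omega : 0 < d), mul_comm]
  · rintro ⟨q, d⟩ hp
    simp only [Finset.mem_sigma, Finset.mem_Icc, Nat.mem_divisors] at hp
    obtain ⟨_, hdq, _⟩ := hp
    simp [Nat.div_mul_cancel hdq]

lemma countA_eq (Q k m b : ℕ) (α : ℝ) (hα : α ∈ Set.Icc (0:ℝ) 1) :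
    (countA Q k m b α : ℤ) =
      ∑ d ∈ Finset.Icc 1 Q, (μ d : ℤ) *
        ∑ q ∈ Finset.Icc 1 (Q / d),
          if q * d ≡ b [MOD m] ∧ IsKFree k (q * d) then (⌊(q:ℝ) * α⌋₊ : ℤ) else 0 := by
  obtain ⟨hα0, hα1⟩ := hα
  have stepA : (countA Q k m b α : ℤ) =
      ∑ q ∈ Finset.Icc 1 Q, if q ≡ b [MOD m] ∧ IsKFree k q then
        (((Finset.Icc 1 (⌊(q:ℝ)*α⌋₊)).filter (fun a => Nat.gcd a q = 1)).card : ℤ) else 0 := by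
    rw [countA, Finset.card_filter]
    push_cast
    rw [Finset.sum_product_right]
    refine Finset.sum_congr rfl fun q hq => ?_
    simp only [Finset.mem_Icc] at hq
    have hNQ : ⌊(q:ℝ)*α⌋₊ ≤ Q := by
      have h1 : (q:ℝ)*α ≤ q := mul_le_of_le_one_right (by positivity) hα1
      have := Nat.floor_le_floor h1
      rw [Nat.floor_natCast] at this
      omega
    by_cases hc : q ≡ b [MOD m] ∧ IsKFree k q
    · rw [if_pos hc, Finset.card_filter]
      push_cast
      have key : ∀ a ∈ Finset.Icc 1 Q,
          (if ((a:ℝ) ≤ (q:ℝ) * α ∧ Nat.gcd a q = 1 ∧ IsKFree k q ∧ q ≡ b [MOD m])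
            then (1:ℤ) else 0) =
          (if (a ≤ ⌊(q:ℝ)*α⌋₊ ∧ Nat.gcd a q = 1) then (1:ℤ) else 0) := by
        intro a ha
        refine if_congr ?_ rfl rfl
        have : (a:ℝ) ≤ (q:ℝ) * α ↔ a ≤ ⌊(q:ℝ)*α⌋₊ := (Nat.le_floor_iff (by positivity)).symm
        constructor
        · rintro ⟨h1, h2, _⟩; exact ⟨this.1 h1, h2⟩
        · rintro ⟨h1, h2⟩; exact ⟨this.2 h1, h2, hc.2, hc.1⟩
      rw [Finset.sum_congr rfl key]
      rw [← Finset.sum_filter, ← Finset.sum_filter]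
      congr 1
      ext a
      simp only [Finset.mem_filter, Finset.mem_Icc]
      constructor
      · rintro ⟨⟨h1, _⟩, h3, h4⟩; exact ⟨⟨h1, h3⟩, h4⟩
      · rintro ⟨⟨h1, h2⟩, h3⟩; exact ⟨⟨h1, le_trans h2 hNQ⟩, h2, h3⟩
    · rw [if_neg hc]
      refine Finset.sum_eq_zero fun a ha => ?_
      rw [if_neg]
      tauto
  rw [stepA]
  have stepB : ∀ q ∈ Finset.Icc 1 Q,
      (if q ≡ b [MOD m] ∧ IsKFree k q then
        (((Finset.Icc 1 (⌊(q:ℝ)*α⌋₊)).filter (fun a => Nat.gcd a q = 1)).card : ℤ) else 0) =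
      ∑ d ∈ q.divisors, (if q ≡ b [MOD m] ∧ IsKFree k q then
        (μ d : ℤ) * ((⌊(q:ℝ)*α⌋₊ / d : ℕ) : ℤ) else 0) := by
    intro q hq
    simp only [Finset.mem_Icc] at hq
    by_cases hc : q ≡ b [MOD m] ∧ IsKFree k q
    · simp only [if_pos hc]
      exact count_coprime q _ (by omega)
    · rw [if_neg hc]
      exact (Finset.sum_eq_zero fun _ _ => if_neg hc).symm
  rw [Finset.sum_congr rfl stepB, swap_div Q (fun d q =>
    if q ≡ b [MOD m] ∧ IsKFree k q then (μ d : ℤ) * ((⌊(q:ℝ)*α⌋₊ / d : ℕ) : ℤ) else 0)]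
  refine Finset.sum_congr rfl fun d hd => ?_
  simp only [Finset.mem_Icc] at hd
  rw [Finset.mul_sum]
  refine Finset.sum_congr rfl fun q hq => ?_
  simp only [Finset.mem_Icc] at hq
  have hfl : ⌊((q*d : ℕ):ℝ)*α⌋₊ / d = ⌊(q:ℝ)*α⌋₊ := by
    have h1 : ((q*d : ℕ):ℝ)*α / (d:ℕ) = (q:ℝ)*α := by
      have hd0 : (d:ℝ) ≠ 0 := Nat.cast_ne_zero.2 (by omega)
      push_cast
      field_simp
    have := Nat.floor_div_natCast (((q*d : ℕ):ℝ)*α) d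
    rw [h1] at this
    omega
  rw [hfl, mul_ite, mul_zero]

/-- the Möbius-inverted identity
`A(α) − αN = −∑_{d ≤ Q} μ(d) ∑_{q ≤ Q/d, qd ≡ b (mod m)} μ_k(qd)² {qα}`. -/
theorem countA_sub_identity (Q k m b : ℕ) (hQ : 1 ≤ Q) (hk : 2 ≤ k) (hm : 1 ≤ m)
    (hb : Nat.gcd b m = 1) (α : ℝ) (hα : α ∈ Set.Icc (0:ℝ) 1) :
    (countA Q k m b α : ℝ) - α * (countA Q k m b 1 : ℝ) =
      -∑ d ∈ Finset.Icc 1 Q, (ArithmeticFunction.moebius d : ℝ) *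
        ∑ q ∈ Finset.Icc 1 (Q / d),
          if q * d ≡ b [MOD m] ∧ IsKFree k (q * d) then Int.fract ((q : ℝ) * α) else 0 := by
  obtain ⟨hα0, hα1⟩ := hα
  have h1 := countA_eq Q k m b α ⟨hα0, hα1⟩
  have h2 := countA_eq Q k m b 1 ⟨zero_le_one, le_refl 1⟩
  have h1' : (countA Q k m b α : ℝ) = ∑ d ∈ Finset.Icc 1 Q, (μ d : ℝ) *
      ∑ q ∈ Finset.Icc 1 (Q / d),
        if q * d ≡ b [MOD m] ∧ IsKFree k (q * d) then ((⌊(q:ℝ)*α⌋₊ : ℝ)) else 0 := by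
    have := congrArg (fun z : ℤ => (z : ℝ)) h1
    push_cast at this
    simpa [apply_ite (fun z : ℤ => (z : ℝ))] using this
  have h2' : (countA Q k m b 1 : ℝ) = ∑ d ∈ Finset.Icc 1 Q, (μ d : ℝ) *
      ∑ q ∈ Finset.Icc 1 (Q / d),
        if q * d ≡ b [MOD m] ∧ IsKFree k (q * d) then ((q : ℝ)) else 0 := by
    have := congrArg (fun z : ℤ => (z : ℝ)) h2
    push_cast at this
    simpa [apply_ite (fun z : ℤ => (z : ℝ))] using this
  rw [h1', h2', ← Finset.sum_neg_distrib, Finset.mul_sum (s := Finset.Icc 1 Q),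
    ← Finset.sum_sub_distrib]
  refine Finset.sum_congr rfl fun d hd => ?_
  rw [← mul_neg, mul_left_comm α, ← mul_sub]
  congr 1
  rw [← Finset.sum_neg_distrib, Finset.mul_sum (s := Finset.Icc 1 (Q / d)),
    ← Finset.sum_sub_distrib]
  refine Finset.sum_congr rfl fun q hq => ?_
  by_cases hc : q * d ≡ b [MOD m] ∧ IsKFree k (q * d)
  · rw [if_pos hc, if_pos hc, if_pos hc]
    have hnn : (0:ℝ) ≤ (q:ℝ) * α := by positivity
    have hfl : ((⌊(q:ℝ)*α⌋₊ : ℝ)) = ((⌊(q:ℝ)*α⌋ : ℤ) : ℝ) := natCast_floor_eq_intCast_floor hnn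
    have hfr : Int.fract ((q:ℝ)*α) = (q:ℝ)*α - ((⌊(q:ℝ)*α⌋ : ℤ) : ℝ) := rfl
    rw [hfl, hfr]
    ring
  · rw [if_neg hc, if_neg hc, if_neg hc]
    ring
end

section
/- For Q ≥ 1, δ, d₁, d₂, r ≥ 1 and a continuous function H supported in (0,Λ), the double integral ∫₀^{Q/(δd₁)} ∫₀^{Q/(δd₂)} H( Q²·C·r /(xyδ) ) dx dy equals (Q²·C·r/δ) ∫_{rδd₁d₂C}^{Λ} (H(λ)/λ²) · log( λ/(rδd₁d₂C) ) dλ, for any constant C > 0. -/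
open intervalIntegral MeasureTheory Set

/-- If the integrand vanishes on `Ioc 0 ε`, the interval integral from 0 to ε is 0,
and the function is interval integrable there. -/
lemma integ_zero_aux {f : ℝ → ℝ} {ε : ℝ} (hε : 0 ≤ ε)
    (h : ∀ x ∈ Set.Ioc (0:ℝ) ε, f x = 0) :
    IntervalIntegrable f MeasureTheory.volume 0 ε ∧ (∫ x in (0:ℝ)..ε, f x) = 0 := by
  have hae : f =ᵐ[MeasureTheory.volume.restrict (Set.Ioc (0:ℝ) ε)] 0 := by
    filter_upwards [MeasureTheory.ae_restrict_mem measurableSet_Ioc] with x hx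
    exact h x hx
  constructor
  · rw [intervalIntegrable_iff_integrableOn_Ioc_of_le hε]
    exact (MeasureTheory.integrable_zero _ _ _).congr hae.symm
  · rw [intervalIntegral.integral_of_le hε, MeasureTheory.integral_congr_ae hae]
    simp

lemma lemA {G : ℝ → ℝ} {Λ K B : ℝ} (hΛ : 0 < Λ) (hK : 0 < K) (hB : 0 < B)
    (hGc : ContinuousOn G (Set.Ioi 0))
    (hG0 : ∀ l, Λ ≤ l → G l = 0) :
    (∫ x in (0:ℝ)..B, G (K / x)) = K * ∫ l in (K / B)..Λ, G l / l ^ 2 := by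
  by_cases hc : Λ ≤ K / B
  · -- everything vanishes
    have h1 : (∫ x in (0:ℝ)..B, G (K / x)) = 0 := by
      refine (integ_zero_aux hB.le fun x hx => ?_).2
      refine hG0 _ (hc.trans ?_)
      exact div_le_div_of_nonneg_left hK.le hx.1 hx.2
    have h2 : (∫ l in (K / B)..Λ, G l / l ^ 2) = 0 := by
      rw [intervalIntegral.integral_congr (g := fun _ => (0:ℝ)) ?_]
      · simp
      · intro l hl
        rw [Set.uIcc_of_ge hc] at hl
        simp [hG0 l hl.1]
    rw [h1, h2, mul_zero]
  · push_neg at hc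
    set ε := K / Λ with hεdef
    have hε : 0 < ε := div_pos hK hΛ
    have hεB : ε ≤ B := by
      rw [hεdef, div_le_iff₀ hΛ]
      rw [div_lt_iff₀ hB] at hc
      linarith
    have hsub : Set.uIcc ε B ⊆ Set.Ioi (0:ℝ) := by
      rw [Set.uIcc_of_le hεB]
      exact fun x hx => lt_of_lt_of_le hε hx.1
    -- integrability on [0, ε] with zero integral
    have h0 := integ_zero_aux hε.le (f := fun x => G (K / x)) ?zero
    case zero =>
      intro x hx
      refine hG0 _ ?_
      rw [hεdef] at hx
      rw [le_div_iff₀ hx.1]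
      calc Λ * x ≤ Λ * (K / Λ) := by nlinarith [hx.2]
        _ = K := by field_simp
    -- continuity on [ε, B]
    have hcont : ContinuousOn (fun x => G (K / x)) (Set.uIcc ε B) := by
      apply hGc.comp
      · apply ContinuousOn.div continuousOn_const continuousOn_id
        intro x hx; exact (hsub hx).out.ne'
      · intro x hx; exact div_pos hK (hsub hx)
    have h2 : IntervalIntegrable (fun x => G (K / x)) MeasureTheory.volume ε B :=
      hcont.intervalIntegrable
    have hsplit : (∫ x in (0:ℝ)..B, G (K / x)) = ∫ x in ε..B, G (K / x) := by
      rw [← intervalIntegral.integral_add_adjacent_intervals h0.1 h2, h0.2, zero_add]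
    rw [hsplit]
    -- substitution l = K / x
    have hderiv : ∀ x ∈ Set.uIcc ε B, HasDerivAt (fun x => K / x) (-K / x ^ 2) x := by
      intro x hx
      have hx0 : x ≠ 0 := (hsub hx).out.ne'
      have h1 := (hasDerivAt_inv hx0).const_mul K
      have h2 : (fun x : ℝ => K / x) = fun x => K * x⁻¹ := by
        funext t; rw [div_eq_mul_inv]
      rw [h2]
      rw [show -K / x ^ 2 = K * -(x ^ 2)⁻¹ by ring]
      exact h1
    have hcont' : ContinuousOn (fun x => -K / x ^ 2) (Set.uIcc ε B) := by
      apply ContinuousOn.div continuousOn_const (by fun_prop)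
      intro x hx; exact pow_ne_zero _ (hsub hx).out.ne'
    have hgc : ContinuousOn (fun l => K * G l / l ^ 2) ((fun x => K / x) '' Set.uIcc ε B) := by
      refine ContinuousOn.mono (s := Set.Ioi 0) ?_ ?_
      · exact ContinuousOn.div (continuousOn_const.mul hGc) (by fun_prop)
          (fun l hl => pow_ne_zero _ hl.out.ne')
      · rintro l ⟨x, hx, rfl⟩; exact div_pos hK (hsub hx)
    have key := intervalIntegral.integral_comp_smul_deriv' hderiv hcont' hgc
    have hfε : K / ε = Λ := by rw [hεdef]; field_simp
    rw [hfε] at key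
    have hlhs : (∫ x in ε..B, (-K / x ^ 2) • ((fun l => K * G l / l ^ 2) ∘ fun x => K / x) x)
        = ∫ x in ε..B, -(G (K / x)) := by
      apply intervalIntegral.integral_congr
      intro x hx
      have hx0 : (0:ℝ) < x := hsub hx
      simp only [Function.comp, smul_eq_mul]
      field_simp
    rw [hlhs, intervalIntegral.integral_neg] at key
    have : (∫ x in ε..B, G (K / x)) = - ∫ l in Λ..(K / B), K * G l / l ^ 2 := by
      linarith [key]
    rw [this, ← intervalIntegral.integral_symm, ← intervalIntegral.integral_const_mul]
    apply intervalIntegral.integral_congr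
    intro l hl
    simp [mul_div_assoc]
lemma hasDerivAt_F {H : ℝ → ℝ} {Λ m : ℝ} (hΛ : 0 < Λ) (hm : 0 < m)
    (hH : Continuous H) :
    HasDerivAt (fun t => ∫ l in t..Λ, H l / l ^ 2) (-(H m / m ^ 2)) m := by
  have hint : IntervalIntegrable (fun l => H l / l ^ 2) MeasureTheory.volume Λ m := by
    apply ContinuousOn.intervalIntegrable
    apply ContinuousOn.div hH.continuousOn (by fun_prop)
    intro l hl
    rcases Set.mem_uIcc.mp hl with h | h
    · exact pow_ne_zero _ (lt_of_lt_of_le hΛ h.1).ne'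
    · exact pow_ne_zero _ (lt_of_lt_of_le hm h.1).ne'
  have hmeas : StronglyMeasurableAtFilter (fun l => H l / l ^ 2) (nhds m) := by
    exact ((hH.measurable.div (measurable_id.pow_const 2)).stronglyMeasurable).stronglyMeasurableAtFilter
  have hca : ContinuousAt (fun l => H l / l ^ 2) m :=
    ContinuousAt.div hH.continuousAt (by fun_prop) (pow_ne_zero _ hm.ne')
  have h1 := (intervalIntegral.integral_hasDerivAt_right hint hmeas hca).neg
  have h2 : (fun t => -∫ l in Λ..t, H l / l ^ 2) = fun t => ∫ l in t..Λ, H l / l ^ 2 := by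
    funext t; rw [← intervalIntegral.integral_symm]
  rw [← h2]; exact h1

lemma lemB2 {H : ℝ → ℝ} {Λ a : ℝ} (hΛ : 0 < Λ) (ha : 0 < a)
    (hH : Continuous H) (hH0 : ∀ l, Λ ≤ l → H l = 0) :
    (∫ m in a..Λ, (∫ l in m..Λ, H l / l ^ 2) / m)
      = ∫ l in a..Λ, H l / l ^ 2 * Real.log (l / a) := by
  by_cases hc : Λ ≤ a
  · have h1 : (∫ m in a..Λ, (∫ l in m..Λ, H l / l ^ 2) / m) = 0 := by
      rw [intervalIntegral.integral_congr (g := fun _ => (0:ℝ)) ?_]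
      · simp
      · intro m hm
        rw [Set.uIcc_of_ge hc] at hm
        have : (∫ l in m..Λ, H l / l ^ 2) = 0 := by
          rw [intervalIntegral.integral_congr (g := fun _ => (0:ℝ)) ?_]
          · simp
          · intro l hl
            rw [Set.uIcc_of_ge hm.1] at hl
            simp [hH0 l hl.1]
        simp [this]
    have h2 : (∫ l in a..Λ, H l / l ^ 2 * Real.log (l / a)) = 0 := by
      rw [intervalIntegral.integral_congr (g := fun _ => (0:ℝ)) ?_]
      · simp
      · intro l hl
        rw [Set.uIcc_of_ge hc] at hl
        simp [hH0 l hl.1]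
    rw [h1, h2]
  · push_neg at hc
    have hsub : Set.uIcc a Λ ⊆ Set.Ioi (0:ℝ) := by
      rw [Set.uIcc_of_le hc.le]
      exact fun x hx => lt_of_lt_of_le ha hx.1
    have hu : ∀ m ∈ Set.uIcc a Λ, HasDerivAt (fun t => ∫ l in t..Λ, H l / l ^ 2)
        (-(H m / m ^ 2)) m := fun m hm => hasDerivAt_F hΛ (hsub hm) hH
    have hv : ∀ m ∈ Set.uIcc a Λ, HasDerivAt (fun t => Real.log (t / a)) (1 / m) m := by
      intro m hm
      have hm0 : (0:ℝ) < m := hsub hm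
      have h1 : HasDerivAt (fun t : ℝ => t / a) (1 / a) m := by
        simpa using (hasDerivAt_id m).div_const a
      have h2 := h1.log (by positivity : m / a ≠ 0)
      convert h2 using 1
      field_simp
    have hu' : IntervalIntegrable (fun m => -(H m / m ^ 2)) MeasureTheory.volume a Λ := by
      apply ContinuousOn.intervalIntegrable
      apply ContinuousOn.neg
      exact ContinuousOn.div hH.continuousOn (by fun_prop)
        (fun l hl => pow_ne_zero _ (hsub hl).out.ne')
    have hv' : IntervalIntegrable (fun m => 1 / m) MeasureTheory.volume a Λ := by
      apply ContinuousOn.intervalIntegrable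
      exact ContinuousOn.div continuousOn_const continuousOn_id
        (fun l hl => (hsub hl).out.ne')
    have key := intervalIntegral.integral_mul_deriv_eq_deriv_mul hu hv hu' hv'
    have e1 : (∫ l in Λ..Λ, H l / l ^ 2) = 0 := intervalIntegral.integral_same
    have e2 : Real.log (a / a) = 0 := by rw [div_self ha.ne']; simp
    rw [e1, e2] at key
    simp only [zero_mul, mul_zero, neg_zero, zero_sub] at key
    have lhs_eq : (∫ m in a..Λ, (∫ l in m..Λ, H l / l ^ 2) / m)
        = ∫ m in a..Λ, (∫ l in m..Λ, H l / l ^ 2) * (1 / m) := by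
      apply intervalIntegral.integral_congr
      intro m _; exact div_eq_mul_one_div _ _
    rw [lhs_eq, key, ← intervalIntegral.integral_neg]
    apply intervalIntegral.integral_congr
    intro l _
    ring

/-- change of variables identity
`∫₀^{Q/(δd₁)} ∫₀^{Q/(δd₂)} H(Q²Cr/(xyδ)) dx dy
  = (Q²Cr/δ) ∫_{rδd₁d₂C}^{Λ} (H(λ)/λ²) log(λ/(rδd₁d₂C)) dλ`. -/
theorem double_integral_change_of_variables (Q δ d₁ d₂ r : ℕ)
    (hQ : 1 ≤ Q) (hδ : 1 ≤ δ) (hd₁ : 1 ≤ d₁) (hd₂ : 1 ≤ d₂) (hr : 1 ≤ r)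
    (Λ C : ℝ) (hΛ : 0 < Λ) (hC : 0 < C)
    (H : ℝ → ℝ) (hH : Continuous H) (hsupp : Function.support H ⊆ Set.Ioo 0 Λ) :
    (∫ y in (0:ℝ)..((Q : ℝ) / (δ * d₂)), ∫ x in (0:ℝ)..((Q : ℝ) / (δ * d₁)),
        H ((Q : ℝ) ^ 2 * C * r / (x * y * δ))) =
      (Q : ℝ) ^ 2 * C * r / δ *
        ∫ lam in ((r : ℝ) * δ * d₁ * d₂ * C)..Λ,
          H lam / lam ^ 2 * Real.log (lam / ((r : ℝ) * δ * d₁ * d₂ * C)) := by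
  have hQ0 : (0:ℝ) < Q := Nat.cast_pos.mpr (by omega)
  have hδ0 : (0:ℝ) < δ := Nat.cast_pos.mpr (by omega)
  have hd₁0 : (0:ℝ) < d₁ := Nat.cast_pos.mpr (by omega)
  have hd₂0 : (0:ℝ) < d₂ := Nat.cast_pos.mpr (by omega)
  have hr0 : (0:ℝ) < r := Nat.cast_pos.mpr (by omega)
  have hH0 : ∀ l, Λ ≤ l → H l = 0 := by
    intro l hl
    by_contra hne
    exact absurd (hsupp (Function.mem_support.mpr hne)).2 (not_lt.mpr hl)
  have hH00 : H 0 = 0 := by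
    by_contra hne
    exact absurd (hsupp (Function.mem_support.mpr hne)).1 (lt_irrefl 0)
  set B₁ : ℝ := (Q:ℝ)/(δ*d₁) with hB₁def
  set B₂ : ℝ := (Q:ℝ)/(δ*d₂) with hB₂def
  set K0 : ℝ := (Q:ℝ)^2*C*(r:ℝ) with hK0def
  set a : ℝ := (r:ℝ)*(δ:ℝ)*(d₁:ℝ)*(d₂:ℝ)*C with hadef
  set A : ℝ := (Q:ℝ)*C*(r:ℝ)*(d₁:ℝ) with hAdef
  have hB₁pos : 0 < B₁ := by rw [hB₁def]; positivity
  have hB₂pos : 0 < B₂ := by rw [hB₂def]; positivity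
  have hK0pos : 0 < K0 := by rw [hK0def]; positivity
  have hapos : 0 < a := by rw [hadef]; positivity
  have hApos : 0 < A := by rw [hAdef]; positivity
  -- F-related facts
  have hFc : ContinuousOn (fun m => ∫ l in m..Λ, H l / l ^ 2) (Set.Ioi (0:ℝ)) :=
    fun m hm => ((hasDerivAt_F hΛ hm hH).continuousAt).continuousWithinAt
  have hF0 : ∀ m, Λ ≤ m → (∫ l in m..Λ, H l / l ^ 2) = 0 := by
    intro m hm
    rw [intervalIntegral.integral_congr (g := fun _ => (0:ℝ)) ?_]
    · simp
    · intro l hl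
      rw [Set.uIcc_of_ge hm] at hl
      simp [hH0 l hl.1]
  -- Step 1 : compute inner integral
  have step1 : Set.EqOn (fun y => ∫ x in (0:ℝ)..B₁, H (K0/(x*y*(δ:ℝ))))
      (fun y => K0/(δ:ℝ) * ((1/y) * ∫ l in (A/y)..Λ, H l / l ^ 2))
      (Set.uIcc (0:ℝ) B₂) := by
    intro y hy
    rcases eq_or_lt_of_le (by
      rw [Set.uIcc_of_le hB₂pos.le] at hy; exact hy.1) with h0 | hypos
    · -- y = 0
      simp only [← h0]
      simp [hH00]
    · -- y > 0
      simp only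
      have e1 : ∀ x, H (K0/(x*y*(δ:ℝ))) = H ((K0/(y*(δ:ℝ)))/x) := by
        intro x
        congr 1
        rw [div_div]
        ring_nf
      have e1' : (∫ x in (0:ℝ)..B₁, H (K0/(x*y*(δ:ℝ))))
          = ∫ x in (0:ℝ)..B₁, H ((K0/(y*(δ:ℝ)))/x) :=
        intervalIntegral.integral_congr fun x _ => e1 x
      rw [e1', lemA hΛ (div_pos hK0pos (by positivity)) hB₁pos hH.continuousOn hH0]
      have e2 : K0/(y*(δ:ℝ))/B₁ = A/y := by
        rw [hK0def, hB₁def, hAdef]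
        field_simp
      have e3 : K0/(y*(δ:ℝ)) = K0/(δ:ℝ) * (1/y) := by
        rw [mul_comm y, ← div_div, div_eq_mul_one_div]
      rw [e2, e3, mul_assoc]
  rw [intervalIntegral.integral_congr step1, intervalIntegral.integral_const_mul]
  -- Step 2 : compute outer integral
  have hGA : ∀ y : ℝ, (1/y) * (∫ l in (A/y)..Λ, H l / l ^ 2)
      = (A/y)/A * ∫ l in (A/y)..Λ, H l / l ^ 2 := by
    intro y
    congr 1
    rw [div_div, mul_comm, ← div_div, div_self hApos.ne']
  have hGc : ContinuousOn (fun m => m/A * ∫ l in m..Λ, H l / l ^ 2) (Set.Ioi (0:ℝ)) :=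
    (continuousOn_id.div_const _).mul hFc
  have hG0 : ∀ m, Λ ≤ m → m/A * (∫ l in m..Λ, H l / l ^ 2) = 0 := by
    intro m hm
    rw [hF0 m hm, mul_zero]
  have key := lemA (G := fun m => m/A * ∫ l in m..Λ, H l / l ^ 2) hΛ hApos hB₂pos hGc hG0
  have e6 : (∫ y in (0:ℝ)..B₂, (1/y) * ∫ l in (A/y)..Λ, H l / l ^ 2)
      = ∫ y in (0:ℝ)..B₂, (A/y)/A * ∫ l in (A/y)..Λ, H l / l ^ 2 :=
    intervalIntegral.integral_congr fun y _ => hGA y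
  rw [e6, key]
  have e4 : A/B₂ = a := by
    rw [hAdef, hB₂def, hadef]
    field_simp
  rw [e4]
  have e5 : A * (∫ l in a..Λ, l/A * (∫ m in l..Λ, H m / m ^ 2) / l ^ 2)
      = ∫ l in a..Λ, (∫ m in l..Λ, H m / m ^ 2) / l := by
    rw [← intervalIntegral.integral_const_mul]
    apply intervalIntegral.integral_congr
    intro l hl
    have hl0 : (0:ℝ) < l := by
      rcases Set.mem_uIcc.mp hl with h | h
      · exact lt_of_lt_of_le hapos h.1
      · exact lt_of_lt_of_le hΛ h.1
    simp only
    field_simp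
  rw [e5, lemB2 hΛ hapos hH hH0]
end
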